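/- arXiv:1505.04158 — 8 statements merged into one kernel-verified Lean document; each statement's English description precedes it below -/
import Mathlib

section
/- Let β, β' : ℤ → ℝ be functions taking values in {0,1}. For integers i ≤ n define K(n,i) := Σ_{m=i}^{n} (∏_{j=m+1}^{n} (β'(j) − β(j))) · β(m). Then K(n,i) ∈ {0,1} for every pair of integers i ≤ n. -/
/-!
Splitting off the top term gives the recursion `K(n+1,i) = (β'(n+1) - β(n+1)) K(n,i) + β(n+1)`.
If `β(n+1) = 0` this is `β'(n+1) K(n,i)`, and if `β(n+1) = 1` it is `1` or `1 - K(n,i)`; either way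
`{0,1}` is preserved, starting from the empty sum `K(i-1,i) = 0`.
-/

open Finset

variable {R : Type*}

section ZeroOrOne

variable [Ring R] {a b c : R}

lemma mul_eq_zero_or_eq_one (ha : a = 0 ∨ a = 1) (hb : b = 0 ∨ b = 1) :
    a * b = 0 ∨ a * b = 1 := by
  rcases ha with rfl | rfl <;> simp [hb]

lemma one_sub_eq_zero_or_eq_one (ha : a = 0 ∨ a = 1) : 1 - a = 0 ∨ 1 - a = 1 := by
  rcases ha with rfl | rfl <;> simp

lemma sub_mul_add_eq_zero_or_eq_one (ha : a = 0 ∨ a = 1) (hb : b = 0 ∨ b = 1)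
    (hc : c = 0 ∨ c = 1) : (b - a) * c + a = 0 ∨ (b - a) * c + a = 1 := by
  rcases ha with rfl | rfl
  · simpa using mul_eq_zero_or_eq_one hb hc
  rcases hb with rfl | rfl
  · simpa [neg_add_eq_sub] using one_sub_eq_zero_or_eq_one hc
  · simp

end ZeroOrOne

section KpzK

variable [CommRing R] (β β' : ℤ → R)

/-- The paper's `K(n,i)`. -/
noncomputable def kpzK (n i : ℤ) : R :=
  ∑ m ∈ Icc i n, (∏ j ∈ Icc (m + 1) n, (β' j - β j)) * β m

variable {β β'}

lemma kpzK_of_lt {n i : ℤ} (h : n < i) : kpzK β β' n i = 0 := by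
  simp [kpzK, Icc_eq_empty_of_lt h]

lemma kpzK_add_one {n i : ℤ} (h : i ≤ n + 1) :
    kpzK β β' (n + 1) i = (β' (n + 1) - β (n + 1)) * kpzK β β' n i + β (n + 1) := by
  have hprod : ∀ m ∈ Icc i n, ∏ j ∈ Icc (m + 1) (n + 1), (β' j - β j) =
      (β' (n + 1) - β (n + 1)) * ∏ j ∈ Icc (m + 1) n, (β' j - β j) := by
    intro m hm
    rw [← insert_Icc_right_eq_Icc_add_one (by grind), prod_insert (by simp)]
  rw [kpzK, kpzK, ← insert_Icc_right_eq_Icc_add_one h, sum_insert (by simp),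
    sum_congr rfl fun m hm => by rw [hprod m hm, mul_assoc], ← mul_sum,
    Icc_eq_empty_of_lt (lt_add_one _), prod_empty, one_mul, add_comm]

theorem kpzK_eq_zero_or_eq_one (hβ : ∀ m, β m = 0 ∨ β m = 1) (hβ' : ∀ m, β' m = 0 ∨ β' m = 1)
    (n i : ℤ) : kpzK β β' n i = 0 ∨ kpzK β β' n i = 1 := by
  rcases lt_or_ge n (i - 1) with h | h
  · exact .inl (kpzK_of_lt (by omega))
  induction n, h using Int.leInduction with
  | base => exact .inl (kpzK_of_lt (by omega))
  | succ n hn ih =>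
    rw [kpzK_add_one (by omega)]
    exact sub_mul_add_eq_zero_or_eq_one (hβ _) (hβ' _) ih

end KpzK

theorem kpz_K_mem_zero_one_general (β β' : ℤ → ℝ)
    (hβ : ∀ m, β m = 0 ∨ β m = 1) (hβ' : ∀ m, β' m = 0 ∨ β' m = 1)
    (i n : ℤ) :
    (∑ m ∈ Finset.Icc i n, (∏ j ∈ Finset.Icc (m + 1) n, (β' j - β j)) * β m) = 0 ∨
    (∑ m ∈ Finset.Icc i n, (∏ j ∈ Finset.Icc (m + 1) n, (β' j - β j)) * β m) = 1 :=
  kpzK_eq_zero_or_eq_one hβ hβ' n i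

/-- For `β, β' : ℤ → ℝ` taking values in `{0,1}` and integers `i ≤ n`,
the quantity `K(n,i) = ∑_{m=i}^{n} (∏_{j=m+1}^{n} (β'(j) − β(j))) · β(m)` lies in `{0,1}`. -/
theorem kpz_K_mem_zero_one (β β' : ℤ → ℝ)
    (hβ : ∀ m, β m = 0 ∨ β m = 1) (hβ' : ∀ m, β' m = 0 ∨ β' m = 1)
    (i n : ℤ) (hin : i ≤ n) :
    (∑ m ∈ Finset.Icc i n, (∏ j ∈ Finset.Icc (m + 1) n, (β' j - β j)) * β m) = 0 ∨
    (∑ m ∈ Finset.Icc i n, (∏ j ∈ Finset.Icc (m + 1) n, (β' j - β j)) * β m) = 1 :=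
  kpz_K_mem_zero_one_general β β' hβ hβ' i n
end

section
/- Let q ∈ [0,1), ν ∈ [0,1), α > 0 and x ∈ [0,1]. If B and B' are independent Bernoulli random variables with success probabilities α(1−x)/(1+α) and (α+νx)/(1+α) respectively, then E|B' − B| ≤ 1 − (1−ν)/(1+α)². -/
/-!
Since `B` and `B'` take values in `{0, 1}`, `|B' - B| = B + B' - 2 B B'`, so by independence
`E|B' - B| = p + p' - 2 p p'` for the success probabilities `p`, `p'`. With the given `p`, `p'`,
`(1 + α)² (1 - (1 - ν)/(1 + α)² - (p + p' - 2 p p')) = (1 - x)(α² + ν) + α x (1 + ν - 2 ν x)`,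
which is nonnegative because `1 + ν - 2 ν x ≥ 1 - ν ≥ 0`.
-/

open MeasureTheory ProbabilityTheory

lemma eq_indicator_one_of_zero_or_one {Ω : Type*} {B : Ω → ℝ} (hB : ∀ ω, B ω = 0 ∨ B ω = 1) :
    B = {ω | B ω = 1}.indicator 1 := by
  funext ω
  rcases hB ω with h | h <;> simp [h]

section ZeroOneValued

variable {Ω : Type*} [MeasurableSpace Ω] {μ : Measure Ω} {B B' : Ω → ℝ}

lemma integrable_of_zero_or_one [IsFiniteMeasure μ] (hB : Measurable B)
    (hB01 : ∀ ω, B ω = 0 ∨ B ω = 1) : Integrable B μ := by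
  rw [eq_indicator_one_of_zero_or_one hB01]
  exact (integrable_const 1).indicator (hB (measurableSet_singleton 1))

lemma integral_eq_measureReal_of_zero_or_one (hB : Measurable B)
    (hB01 : ∀ ω, B ω = 0 ∨ B ω = 1) : ∫ ω, B ω ∂μ = μ.real {ω | B ω = 1} := by
  conv_lhs => rw [eq_indicator_one_of_zero_or_one hB01]
  exact integral_indicator_one (hB (measurableSet_singleton 1))

lemma abs_sub_eq_of_zero_or_one {b b' : ℝ} (hb : b = 0 ∨ b = 1) (hb' : b' = 0 ∨ b' = 1) :
    |b' - b| = b + b' - 2 * (b * b') := by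
  rcases hb with rfl | rfl <;> rcases hb' with rfl | rfl <;> norm_num

lemma integral_abs_sub_of_indepFun_zero_or_one [IsFiniteMeasure μ]
    (hB : Measurable B) (hB' : Measurable B')
    (hB01 : ∀ ω, B ω = 0 ∨ B ω = 1) (hB'01 : ∀ ω, B' ω = 0 ∨ B' ω = 1)
    (hindep : IndepFun B B' μ) :
    ∫ ω, |B' ω - B ω| ∂μ = ∫ ω, B ω ∂μ + ∫ ω, B' ω ∂μ - 2 * ((∫ ω, B ω ∂μ) * ∫ ω, B' ω ∂μ) := by
  have hBi := integrable_of_zero_or_one (μ := μ) hB hB01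
  have hB'i := integrable_of_zero_or_one (μ := μ) hB' hB'01
  have hmul : ∫ ω, B ω * B' ω ∂μ = (∫ ω, B ω ∂μ) * ∫ ω, B' ω ∂μ :=
    hindep.integral_mul_eq_mul_integral hBi.aestronglyMeasurable hB'i.aestronglyMeasurable
  have hmuli : Integrable (fun ω => B ω * B' ω) μ :=
    hindep.integrable_mul hBi hB'i
  calc ∫ ω, |B' ω - B ω| ∂μ = ∫ ω, (B ω + B' ω - 2 * (B ω * B' ω)) ∂μ :=
        integral_congr_ae (.of_forall fun ω => abs_sub_eq_of_zero_or_one (hB01 ω) (hB'01 ω))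
    _ = _ := by
        rw [integral_sub (f := fun ω => B ω + B' ω) (hBi.add hB'i) (hmuli.const_mul 2),
          integral_add hBi hB'i, integral_const_mul, hmul]

end ZeroOneValued

section KpzProbabilities

variable {ν α x : ℝ}

lemma kpz_mismatch_gap_eq (hα : 1 + α ≠ 0) :
    1 - (1 - ν) / (1 + α) ^ 2 - (α * (1 - x) / (1 + α) + (α + ν * x) / (1 + α)
      - 2 * (α * (1 - x) / (1 + α) * ((α + ν * x) / (1 + α)))) =
      ((1 - x) * (α ^ 2 + ν) + α * x * (1 + ν - 2 * ν * x)) / (1 + α) ^ 2 := by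
  field_simp
  ring

lemma kpz_mismatch_le (hν0 : 0 ≤ ν) (hν1 : ν ≤ 1) (hα : 0 ≤ α) (hx0 : 0 ≤ x) (hx1 : x ≤ 1) :
    α * (1 - x) / (1 + α) + (α + ν * x) / (1 + α)
      - 2 * (α * (1 - x) / (1 + α) * ((α + ν * x) / (1 + α)))
      ≤ 1 - (1 - ν) / (1 + α) ^ 2 := by
  have hfactor : 0 ≤ 1 + ν - 2 * ν * x := by nlinarith
  refine sub_nonneg.mp ?_
  rw [kpz_mismatch_gap_eq (by positivity)]
  exact div_nonneg (add_nonneg (mul_nonneg (by linarith) (by positivity))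
    (mul_nonneg (by positivity) hfactor)) (sq_nonneg _)

end KpzProbabilities

theorem kpz_bernoulli_diff_moment_general
    {Ω : Type*} [MeasurableSpace Ω] (μ : Measure Ω) [IsProbabilityMeasure μ]
    (ν α x : ℝ)
    (hν0 : 0 ≤ ν) (hν1 : ν < 1) (hα : 0 < α)
    (hx : x ∈ Set.Icc (0 : ℝ) 1)
    (B B' : Ω → ℝ) (hB : Measurable B) (hB' : Measurable B')
    (hB01 : ∀ ω, B ω = 0 ∨ B ω = 1) (hB'01 : ∀ ω, B' ω = 0 ∨ B' ω = 1)
    (hBp : μ {ω | B ω = 1} = ENNReal.ofReal (α * (1 - x) / (1 + α)))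
    (hB'p : μ {ω | B' ω = 1} = ENNReal.ofReal ((α + ν * x) / (1 + α)))
    (hindep : IndepFun B B' μ) :
    ∫ ω, |B' ω - B ω| ∂μ ≤ 1 - (1 - ν) / (1 + α) ^ 2 := by
  obtain ⟨hx0, hx1⟩ := hx
  have hp : ∫ ω, B ω ∂μ = α * (1 - x) / (1 + α) := by
    rw [integral_eq_measureReal_of_zero_or_one hB hB01, measureReal_def, hBp,
      ENNReal.toReal_ofReal (by have := sub_nonneg.mpr hx1; positivity)]
  have hp' : ∫ ω, B' ω ∂μ = (α + ν * x) / (1 + α) := by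
    rw [integral_eq_measureReal_of_zero_or_one hB' hB'01, measureReal_def, hB'p,
      ENNReal.toReal_ofReal (by positivity)]
  rw [integral_abs_sub_of_indepFun_zero_or_one hB hB' hB01 hB'01 hindep, hp, hp']
  exact kpz_mismatch_le hν0 hν1.le hα.le hx0 hx1

/-- For independent Bernoulli variables `B, B'` with success probabilities
`α(1−x)/(1+α)` and `(α+νx)/(1+α)` respectively (`q ∈ [0,1)`, `ν ∈ [0,1)`, `α > 0`,
`x ∈ [0,1]`), one has `E|B' − B| ≤ 1 − (1−ν)/(1+α)²`. -/
theorem kpz_bernoulli_diff_moment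
    {Ω : Type*} [MeasurableSpace Ω] (μ : Measure Ω) [IsProbabilityMeasure μ]
    (q ν α x : ℝ)
    (hq0 : 0 ≤ q) (hq1 : q < 1) (hν0 : 0 ≤ ν) (hν1 : ν < 1) (hα : 0 < α)
    (hx : x ∈ Set.Icc (0 : ℝ) 1)
    (B B' : Ω → ℝ) (hB : Measurable B) (hB' : Measurable B')
    (hB01 : ∀ ω, B ω = 0 ∨ B ω = 1) (hB'01 : ∀ ω, B' ω = 0 ∨ B' ω = 1)
    (hBp : μ {ω | B ω = 1} = ENNReal.ofReal (α * (1 - x) / (1 + α)))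
    (hB'p : μ {ω | B' ω = 1} = ENNReal.ofReal ((α + ν * x) / (1 + α)))
    (hindep : IndepFun B B' μ) :
    ∫ ω, |B' ω - B ω| ∂μ ≤ 1 - (1 - ν) / (1 + α) ^ 2 :=
  kpz_bernoulli_diff_moment_general μ ν α x hν0 hν1 hα hx B B' hB hB' hB01 hB'01 hBp hB'p hindep
end

section
/- Fix q ∈ (0,1), ν ∈ [0,1), α > 0 and a function g : ℤ → ℕ. On a probability space, let (B_m)_{m∈ℤ} and (B'_m)_{m∈ℤ} be a mutually independent family of random variables where B_m is Bernoulli with success probability α(1−q^{g(m)})/(1+α) and B'_m is Bernoulli with success probability (α+νq^{g(m)})/(1+α). For n ∈ ℤ let K_n := Σ_{m ≤ n} (∏_{j=m+1}^{n} (B'_j − B_j)) · B_m (the series converges absolutely almost surely and in L^1). Then E(K_n) = Σ_{m ≤ n} (∏_{j=m+1}^{n} ((ν+α)q^{g(j)})/(1+α)) · (α(1−q^{g(m)})/(1+α)), where the series on the right converges absolutely. -/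
/-!
Each summand of `K_n` is a product of functions of the pairs `(B_j, B'_j)`, `m ≤ j ≤ n`, and these
pairs are independent, so its expectation factorises as `∏ E(B'_j − B_j) · E B_m`. The same
factorisation bounds the expected absolute value of the `m`-th summand by `c ^ (n - m)`, where
`c = 1 − (1 − ν)/(1 + α)² < 1` bounds `E|B'_j − B_j| = P(B_j ≠ B'_j) ≤ 1 − P(B_j = 0) P(B'_j = 0)`;
hence expectation and summation may be exchanged, and the resulting series converges absolutely.
-/

open MeasureTheory ProbabilityTheory

/-- The a.s. limit `K_n = ∑_{m ≤ n} (∏_{j=m+1}^{n} (B'_j − B_j)) · B_m`. -/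
noncomputable def kpzKinf {Ω : Type*} (B B' : ℤ → Ω → ℝ) (n : ℤ) (ω : Ω) : ℝ :=
  ∑' m : {m : ℤ // m ≤ n},
    (∏ j ∈ Finset.Icc ((m : ℤ) + 1) n, (B' j ω - B j ω)) * B (m : ℤ) ω

namespace ProbabilityTheory

variable {Ω ι β : Type*} [MeasurableSpace Ω] [MeasurableSpace β] {μ : Measure Ω}

/-- Rectangles generate the product σ-algebra, and on rectangles independence of the pairs reduces
to that of the family `Sum.elim X Y`. -/
theorem iIndepFun.prodMk_of_sumElim {X Y : ι → Ω → β} (hX : ∀ i, Measurable (X i))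
    (hY : ∀ i, Measurable (Y i)) (h : iIndepFun (Sum.elim X Y) μ) :
    iIndepFun (fun i ω ↦ (X i ω, Y i ω)) μ := by
  have key : ∀ (s : Finset ι) (A B : ι → Set β), (∀ i ∈ s, MeasurableSet (A i)) →
      (∀ i ∈ s, MeasurableSet (B i)) →
      μ (⋂ i ∈ s, X i ⁻¹' A i ∩ Y i ⁻¹' B i) = ∏ i ∈ s, μ (X i ⁻¹' A i) * μ (Y i ⁻¹' B i) := by
    intro s A B hA hB
    have hS := h.meas_biInter (S := s.disjSum s) (s := fun k ↦ Sum.elim X Y k ⁻¹' Sum.elim A B k)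
      (by rintro (i | i) hi <;> simp only [Finset.inl_mem_disjSum, Finset.inr_mem_disjSum] at hi
          exacts [⟨A i, hA i hi, rfl⟩, ⟨B i, hB i hi, rfl⟩])
    simp only [Finset.prod_disjSum, ← Finset.prod_mul_distrib, Sum.elim_inl, Sum.elim_inr] at hS
    rw [← hS]
    congr 1
    ext ω
    simp [Sum.forall, forall_and]
  rw [iIndepFun_iff_iIndep]
  refine iIndepSets.iIndep (fun i ↦ Measurable.comap_le ((hX i).prodMk (hY i))) _
    (fun i ↦ isPiSystem_prod.comap (fun ω ↦ (X i ω, Y i ω)))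
    (fun i ↦ by rw [← generateFrom_prod, MeasurableSpace.comap_generateFrom]; rfl) ?_
  rw [iIndepSets_iff]
  intro s f hf
  simp only [Set.mem_ofPred_eq, Set.mem_image2] at hf
  choose! R hR hRf using hf
  choose! A hA B hB hAB using hR
  have hf : ∀ i ∈ s, f i = X i ⁻¹' A i ∩ Y i ⁻¹' B i := fun i hi ↦ by
    rw [← hRf i hi, ← hAB i hi]
    rfl
  have hsingle : ∀ i ∈ s, μ (f i) = μ (X i ⁻¹' A i) * μ (Y i ⁻¹' B i) := fun i hi ↦ by
    simpa [hf i hi] using key {i} A B (by simpa using hA i hi) (by simpa using hB i hi)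
  rw [Set.iInter₂_congr hf, key s A B hA hB]
  exact Finset.prod_congr rfl fun i hi ↦ (hsingle i hi).symm

theorem iIndepFun.integral_finset_prod_comp {X : ι → Ω → β} (h : iIndepFun X μ)
    (hX : ∀ i, Measurable (X i)) {f : ι → β → ℝ} (hf : ∀ i, Measurable (f i)) (s : Finset ι) :
    ∫ ω, ∏ i ∈ s, f i (X i ω) ∂μ = ∏ i ∈ s, ∫ ω, f i (X i ω) ∂μ := by
  have hs : iIndepFun (fun i : s ↦ X i) μ := h.precomp Subtype.val_injective
  simp_rw [← Finset.prod_coe_sort s]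
  exact hs.integral_fun_prod_comp (f := fun i : s ↦ f i)
    (fun i ↦ (hX i).aemeasurable) (fun i ↦ (hf i).aestronglyMeasurable)

theorem iIndepFun.integral_finset_prod_mul_comp {X : ι → Ω → β} (h : iIndepFun X μ)
    (hX : ∀ i, Measurable (X i)) {f : ι → β → ℝ} (hf : ∀ i, Measurable (f i)) {g : β → ℝ}
    (hg : Measurable g) {s : Finset ι} {m : ι} (hm : m ∉ s) :
    ∫ ω, (∏ i ∈ s, f i (X i ω)) * g (X m ω) ∂μ
      = (∏ i ∈ s, ∫ ω, f i (X i ω) ∂μ) * ∫ ω, g (X m ω) ∂μ := by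
  classical
  have hupd : ∀ i ∈ s, Function.update f m g i = f i := fun i hi ↦
    Function.update_of_ne (ne_of_mem_of_not_mem hi hm) _ _
  have := h.integral_finset_prod_comp hX (f := Function.update f m g)
    (fun i ↦ by rcases eq_or_ne i m with rfl | hi <;> simp [*]) (insert m s)
  simpa only [Finset.prod_insert hm, Function.update_self, mul_comm,
    Finset.prod_congr rfl fun i hi ↦ congrFun (hupd i hi) _,
    Finset.prod_congr rfl fun i hi ↦ congrArg (fun φ ↦ ∫ ω, φ (X i ω) ∂μ) (hupd i hi)] using this

end ProbabilityTheory

section ZeroOne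

variable {Ω : Type*} [MeasurableSpace Ω] {μ : Measure Ω} {X Y : Ω → ℝ}

theorem integral_eq_measureReal_of_zero_or_one_s4 (hX : Measurable X)
    (h01 : ∀ ω, X ω = 0 ∨ X ω = 1) : ∫ ω, X ω ∂μ = μ.real {ω | X ω = 1} := by
  have hind : ∀ ω, X ω = {ω | X ω = 1}.indicator 1 ω := fun ω ↦ by
    rcases h01 ω with h | h <;> simp [Set.indicator, h]
  rw [integral_congr_ae (ae_of_all μ hind)]
  exact integral_indicator_one (hX (measurableSet_singleton 1))

theorem integral_eq_of_zero_or_one_of_measure_eq {p : ℝ} (hX : Measurable X)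
    (h01 : ∀ ω, X ω = 0 ∨ X ω = 1) (hp0 : 0 ≤ p) (hp : μ {ω | X ω = 1} = ENNReal.ofReal p) :
    ∫ ω, X ω ∂μ = p := by
  rw [integral_eq_measureReal_of_zero_or_one_s4 hX h01, measureReal_def, hp, ENNReal.toReal_ofReal hp0]

theorem integrable_of_zero_or_one_s4 [IsFiniteMeasure μ] (hX : Measurable X)
    (h01 : ∀ ω, X ω = 0 ∨ X ω = 1) : Integrable X μ :=
  .of_bound hX.aestronglyMeasurable 1 <| .of_forall fun ω ↦ by rcases h01 ω with h | h <;> simp [h]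

theorem integral_abs_sub_of_zero_or_one [IsFiniteMeasure μ] (hX : Measurable X)
    (hY : Measurable Y) (hX01 : ∀ ω, X ω = 0 ∨ X ω = 1) (hY01 : ∀ ω, Y ω = 0 ∨ Y ω = 1)
    (hXY : IndepFun X Y μ) :
    ∫ ω, |Y ω - X ω| ∂μ = ∫ ω, X ω ∂μ + ∫ ω, Y ω ∂μ - 2 * ((∫ ω, X ω ∂μ) * ∫ ω, Y ω ∂μ) := by
  have hXi := integrable_of_zero_or_one_s4 (μ := μ) hX hX01
  have hYi := integrable_of_zero_or_one_s4 (μ := μ) hY hY01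
  have hpt : ∀ ω, |Y ω - X ω| = X ω + Y ω - 2 * (X ω * Y ω) := fun ω ↦ by
    rcases hX01 ω with h | h <;> rcases hY01 ω with h' | h' <;> norm_num [h, h']
  simp_rw [hpt]
  rw [integral_sub (f := fun ω ↦ X ω + Y ω) (g := fun ω ↦ 2 * (X ω * Y ω)) (hXi.add hYi)
      ((hXY.integrable_mul hXi hYi).const_mul 2), integral_add hXi hYi, integral_const_mul,
    hXY.integral_fun_mul_eq_mul_integral hXi.aestronglyMeasurable hYi.aestronglyMeasurable]

end ZeroOne

theorem summable_pow_card_Icc {r : ℝ} (hr0 : 0 ≤ r) (hr1 : r < 1) (n : ℤ) :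
    Summable fun m : {m : ℤ // m ≤ n} ↦ r ^ (Finset.Icc ((m : ℤ) + 1) n).card := by
  refine (summable_geometric_of_lt_one hr0 hr1).comp_injective
    (i := fun m : {m : ℤ // m ≤ n} ↦ (Finset.Icc ((m : ℤ) + 1) n).card) ?_
  intro a b hab
  simp only [Int.card_Icc] at hab
  have := a.2; have := b.2
  exact Subtype.ext (by omega)

noncomputable def kpzTerm {Ω : Type*} (X Y : ℤ → Ω → ℝ) (n m : ℤ) (ω : Ω) : ℝ :=
  (∏ j ∈ Finset.Icc (m + 1) n, (Y j ω - X j ω)) * X m ω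

section KPZ

variable {Ω : Type*} {X Y : ℤ → Ω → ℝ}

theorem kpzKinf_eq_tsum_kpzTerm (n : ℤ) (ω : Ω) :
    kpzKinf X Y n ω = ∑' m : {m : ℤ // m ≤ n}, kpzTerm X Y n m ω :=
  rfl

theorem abs_kpzTerm_le_one (hX1 : ∀ m ω, |X m ω| ≤ 1) (hYX1 : ∀ j ω, |Y j ω - X j ω| ≤ 1)
    (n m : ℤ) (ω : Ω) : |kpzTerm X Y n m ω| ≤ 1 := by
  rw [kpzTerm, abs_mul, Finset.abs_prod]
  exact mul_le_one₀ (Finset.prod_le_one (fun _ _ ↦ abs_nonneg _) fun j _ ↦ hYX1 j ω)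
    (abs_nonneg _) (hX1 m ω)

variable [MeasurableSpace Ω] {μ : Measure Ω}

theorem integrable_kpzTerm [IsFiniteMeasure μ] (hX : ∀ m, Measurable (X m))
    (hY : ∀ m, Measurable (Y m)) (hX1 : ∀ m ω, |X m ω| ≤ 1)
    (hYX1 : ∀ j ω, |Y j ω - X j ω| ≤ 1) (n m : ℤ) : Integrable (kpzTerm X Y n m) μ :=
  .of_bound (by unfold kpzTerm; fun_prop) 1 (.of_forall (abs_kpzTerm_le_one hX1 hYX1 n m))

theorem integral_kpzTerm (hX : ∀ m, Measurable (X m)) (hY : ∀ m, Measurable (Y m))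
    (h : iIndepFun (Sum.elim X Y) μ) (n m : ℤ) :
    ∫ ω, kpzTerm X Y n m ω ∂μ
      = (∏ j ∈ Finset.Icc (m + 1) n, ∫ ω, (Y j ω - X j ω) ∂μ) * ∫ ω, X m ω ∂μ :=
  (h.prodMk_of_sumElim hX hY).integral_finset_prod_mul_comp (fun j ↦ (hX j).prodMk (hY j))
    (f := fun _ p ↦ p.2 - p.1) (fun _ ↦ by fun_prop) (g := Prod.fst) measurable_fst (by simp)

theorem integral_abs_kpzTerm_le [IsProbabilityMeasure μ] (hX : ∀ m, Measurable (X m))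
    (hY : ∀ m, Measurable (Y m)) (h : iIndepFun (Sum.elim X Y) μ) (hX1 : ∀ m ω, |X m ω| ≤ 1)
    {c : ℝ} (hE : ∀ j, ∫ ω, |Y j ω - X j ω| ∂μ ≤ c) (n m : ℤ) :
    ∫ ω, |kpzTerm X Y n m ω| ∂μ ≤ c ^ (Finset.Icc (m + 1) n).card := by
  have hprod : ∫ ω, |kpzTerm X Y n m ω| ∂μ
      = (∏ j ∈ Finset.Icc (m + 1) n, ∫ ω, |Y j ω - X j ω| ∂μ) * ∫ ω, |X m ω| ∂μ := by
    simp only [kpzTerm, abs_mul, Finset.abs_prod]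
    exact (h.prodMk_of_sumElim hX hY).integral_finset_prod_mul_comp
      (fun j ↦ (hX j).prodMk (hY j)) (f := fun _ p ↦ |p.2 - p.1|) (fun _ ↦ by fun_prop)
      (g := fun p ↦ |p.1|) (by fun_prop) (by simp)
  have hXm : ∫ ω, |X m ω| ∂μ ≤ 1 := by
    simpa using integral_mono_of_nonneg (.of_forall fun ω ↦ abs_nonneg (X m ω))
      (integrable_const (μ := μ) (1 : ℝ)) (.of_forall (hX1 m))
  rw [hprod, ← mul_one (c ^ _), ← Finset.prod_const]
  exact mul_le_mul (Finset.prod_le_prod (fun j _ ↦ integral_nonneg fun _ ↦ abs_nonneg _)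
    fun j _ ↦ hE j) hXm (integral_nonneg fun _ ↦ abs_nonneg _)
    (Finset.prod_nonneg fun j _ ↦ (integral_nonneg fun _ ↦ abs_nonneg _).trans (hE j))

theorem summable_integral_abs_kpzTerm [IsProbabilityMeasure μ] (hX : ∀ m, Measurable (X m))
    (hY : ∀ m, Measurable (Y m)) (h : iIndepFun (Sum.elim X Y) μ) (hX1 : ∀ m ω, |X m ω| ≤ 1)
    {c : ℝ} (hc : c < 1) (hE : ∀ j, ∫ ω, |Y j ω - X j ω| ∂μ ≤ c) (n : ℤ) :
    Summable fun m : {m : ℤ // m ≤ n} ↦ ∫ ω, |kpzTerm X Y n m ω| ∂μ :=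
  have hc0 : 0 ≤ c := (integral_nonneg fun _ ↦ abs_nonneg _).trans (hE 0)
  (summable_pow_card_Icc hc0 hc n).of_nonneg_of_le (fun _ ↦ integral_nonneg fun _ ↦ abs_nonneg _)
    fun m ↦ integral_abs_kpzTerm_le hX hY h hX1 hE n m

theorem integral_kpzKinf [IsProbabilityMeasure μ] (hX : ∀ m, Measurable (X m))
    (hY : ∀ m, Measurable (Y m)) (h : iIndepFun (Sum.elim X Y) μ) (hX1 : ∀ m ω, |X m ω| ≤ 1)
    (hYX1 : ∀ j ω, |Y j ω - X j ω| ≤ 1) {c : ℝ} (hc : c < 1)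
    (hE : ∀ j, ∫ ω, |Y j ω - X j ω| ∂μ ≤ c) (n : ℤ) :
    ∫ ω, kpzKinf X Y n ω ∂μ = ∑' m : {m : ℤ // m ≤ n},
      (∏ j ∈ Finset.Icc ((m : ℤ) + 1) n, ∫ ω, (Y j ω - X j ω) ∂μ) * ∫ ω, X m ω ∂μ := by
  simp_rw [kpzKinf_eq_tsum_kpzTerm]
  rw [← integral_tsum_of_summable_integral_norm
    (F := fun (m : {m : ℤ // m ≤ n}) ω ↦ kpzTerm X Y n m ω)
    (fun m ↦ integrable_kpzTerm hX hY hX1 hYX1 n m)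
    (by simpa only [Real.norm_eq_abs] using summable_integral_abs_kpzTerm hX hY h hX1 hc hE n)]
  exact tsum_congr fun m ↦ integral_kpzTerm hX hY h n m

theorem summable_abs_prod_integral_sub_mul_integral [IsProbabilityMeasure μ]
    (hX : ∀ m, Measurable (X m)) (hY : ∀ m, Measurable (Y m)) (h : iIndepFun (Sum.elim X Y) μ)
    (hX1 : ∀ m ω, |X m ω| ≤ 1) {c : ℝ} (hc : c < 1) (hE : ∀ j, ∫ ω, |Y j ω - X j ω| ∂μ ≤ c)
    (n : ℤ) :
    Summable fun m : {m : ℤ // m ≤ n} ↦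
      |(∏ j ∈ Finset.Icc ((m : ℤ) + 1) n, ∫ ω, (Y j ω - X j ω) ∂μ) * ∫ ω, X m ω ∂μ| :=
  (summable_integral_abs_kpzTerm hX hY h hX1 hc hE n).of_nonneg_of_le (fun _ ↦ abs_nonneg _)
    fun m ↦ integral_kpzTerm hX hY h n m ▸ abs_integral_le_integral_abs

end KPZ

/-- The left-hand side is `P(B ≠ B')` for independent Bernoulli variables `B, B'` of means
`α (1 - Q) / (1 + α)` and `(α + ν Q) / (1 + α)`. -/
theorem kpz_disagreement_le {ν α Q : ℝ} (hν0 : 0 ≤ ν) (hν1 : ν ≤ 1) (hα : 0 ≤ α)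
    (hQ0 : 0 ≤ Q) (hQ1 : Q ≤ 1) :
    α * (1 - Q) / (1 + α) + (α + ν * Q) / (1 + α)
      - 2 * (α * (1 - Q) / (1 + α) * ((α + ν * Q) / (1 + α))) ≤ 1 - (1 - ν) / (1 + α) ^ 2 := by
  have h1α : 0 < 1 + α := by linarith
  have hform : α * (1 - Q) / (1 + α) + (α + ν * Q) / (1 + α)
      - 2 * (α * (1 - Q) / (1 + α) * ((α + ν * Q) / (1 + α)))
      = 1 - ((1 + α * Q) * (1 - ν * Q) + α * (1 - Q) * (α + ν * Q)) / (1 + α) ^ 2 := by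
    field_simp
    ring
  rw [hform, sub_le_sub_iff_left]
  gcongr
  nlinarith [mul_nonneg (mul_nonneg hα (sub_nonneg.2 hQ1)) (add_nonneg hα (mul_nonneg hν0 hQ0)),
    mul_nonneg hν0 (sub_nonneg.2 hQ1),
    mul_nonneg (mul_nonneg hα hQ0) (sub_nonneg.2 (mul_le_one₀ hν1 hQ0 hQ1))]

/-- With `B_m ~ Ber(α(1−q^{g(m)})/(1+α))`, `B'_m ~ Ber((α+νq^{g(m)})/(1+α))`
all mutually independent, `E(K_n) = ∑_{m ≤ n} (∏_{j=m+1}^{n} ((ν+α)q^{g(j)})/(1+α)) ·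
(α(1−q^{g(m)})/(1+α))`, the series on the right converging absolutely. -/
theorem kpz_K_expectation
    {Ω : Type*} [MeasurableSpace Ω] (μ : Measure Ω) [IsProbabilityMeasure μ]
    (q ν α : ℝ) (hq0 : 0 < q) (hq1 : q < 1) (hν0 : 0 ≤ ν) (hν1 : ν < 1) (hα : 0 < α)
    (g : ℤ → ℕ)
    (B B' : ℤ → Ω → ℝ)
    (hBmeas : ∀ m, Measurable (B m)) (hB'meas : ∀ m, Measurable (B' m))
    (hB01 : ∀ m ω, B m ω = 0 ∨ B m ω = 1)
    (hB'01 : ∀ m ω, B' m ω = 0 ∨ B' m ω = 1)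
    (hBp : ∀ m, μ {ω | B m ω = 1} = ENNReal.ofReal (α * (1 - q ^ g m) / (1 + α)))
    (hB'p : ∀ m, μ {ω | B' m ω = 1} = ENNReal.ofReal ((α + ν * q ^ g m) / (1 + α)))
    (hindep : iIndepFun (Sum.elim B B') μ)
    (n : ℤ) :
    (∫ ω, kpzKinf B B' n ω ∂μ) =
      (∑' m : {m : ℤ // m ≤ n},
        (∏ j ∈ Finset.Icc ((m : ℤ) + 1) n, ((ν + α) * q ^ g j) / (1 + α)) *
          (α * (1 - q ^ g (m : ℤ)) / (1 + α))) ∧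
    Summable (fun m : {m : ℤ // m ≤ n} =>
      |(∏ j ∈ Finset.Icc ((m : ℤ) + 1) n, ((ν + α) * q ^ g j) / (1 + α)) *
        (α * (1 - q ^ g (m : ℤ)) / (1 + α))|) := by
  have h1α : 0 < 1 + α := by linarith
  have hQ : ∀ m, 0 ≤ q ^ g m ∧ q ^ g m ≤ 1 := fun m ↦
    ⟨pow_nonneg hq0.le _, pow_le_one₀ hq0.le hq1.le⟩
  have hEB : ∀ m, ∫ ω, B m ω ∂μ = α * (1 - q ^ g m) / (1 + α) := fun m ↦
    integral_eq_of_zero_or_one_of_measure_eq (hBmeas m) (hB01 m)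
      (div_nonneg (mul_nonneg hα.le (sub_nonneg.2 (hQ m).2)) h1α.le) (hBp m)
  have hEB' : ∀ m, ∫ ω, B' m ω ∂μ = (α + ν * q ^ g m) / (1 + α) := fun m ↦
    integral_eq_of_zero_or_one_of_measure_eq (hB'meas m) (hB'01 m)
      (div_nonneg (add_nonneg hα.le (mul_nonneg hν0 (hQ m).1)) h1α.le) (hB'p m)
  have hEdiff : ∀ j, ∫ ω, (B' j ω - B j ω) ∂μ = (ν + α) * q ^ g j / (1 + α) := fun j ↦ by
    rw [integral_sub (integrable_of_zero_or_one_s4 (hB'meas j) (hB'01 j))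
      (integrable_of_zero_or_one_s4 (hBmeas j) (hB01 j)), hEB, hEB']
    field_simp
    ring
  have hEabs : ∀ j, ∫ ω, |B' j ω - B j ω| ∂μ ≤ 1 - (1 - ν) / (1 + α) ^ 2 := fun j ↦ by
    rw [integral_abs_sub_of_zero_or_one (hBmeas j) (hB'meas j) (hB01 j) (hB'01 j)
      (hindep.indepFun Sum.inl_ne_inr), hEB, hEB']
    exact kpz_disagreement_le hν0 hν1.le hα.le (hQ j).1 (hQ j).2
  have hc : 1 - (1 - ν) / (1 + α) ^ 2 < 1 := by
    have := div_pos (sub_pos.2 hν1) (pow_pos h1α 2)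
    linarith
  have hB1 : ∀ m ω, |B m ω| ≤ 1 := fun m ω ↦ by rcases hB01 m ω with h | h <;> simp [h]
  have hBB'1 : ∀ j ω, |B' j ω - B j ω| ≤ 1 := fun j ω ↦ by
    rcases hB01 j ω with h | h <;> rcases hB'01 j ω with h' | h' <;> norm_num [h, h']
  have hK := integral_kpzKinf hBmeas hB'meas hindep hB1 hBB'1 hc hEabs n
  have hS := summable_abs_prod_integral_sub_mul_integral hBmeas hB'meas hindep hB1 hc hEabs n
  simp only [hEdiff, hEB] at hK hS
  exact ⟨hK, hS⟩
end

section
/- Fix q ∈ (0,1), ν ∈ [0,1), α > 0 and a function g : ℤ → ℕ. On a probability space, let (B_m)_{m∈ℤ} and (B'_m)_{m∈ℤ} be a mutually independent family of random variables where B_m is Bernoulli with success probability α(1−q^{g(m)})/(1+α) and B'_m is Bernoulli with success probability (α+νq^{g(m)})/(1+α). For n ∈ ℤ let K_n := Σ_{m ≤ n} (∏_{j=m+1}^{n} (B'_j − B_j)) · B_m (the series converges absolutely almost surely and in L^2). Then for all integers n₁ ≥ n₂ one has Cov(K_{n₁}, K_{n₂}) = (∏_{k=n₂+1}^{n₁}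 ((ν+α)q^{g(k)})/(1+α)) · (1 − E(K_{n₂})) · E(K_{n₂}), where Cov(X,Y) := E(XY) − E(X)E(Y). -/
/-!
Write `D_j = B'_j - B_j`. Each site has `P(D_j ≠ 0) ≤ 1 - (1 - ν) / (1 + α)² < 1` and the sites are
independent, so almost surely some `D_j` with `j ≤ n₂` vanishes. On that event the series are
finite sums, `K_n ∈ {0, 1}`, and `K_{n₁} = (∏_{n₂ < k ≤ n₁} D_k) K_{n₂} + S` where the product and
`S` only involve the sites in `(n₂, n₁]`. These are independent of the truncations of `K_{n₂}` to
finitely many sites `≤ n₂`, hence (by dominated convergence) uncorrelated with `K_{n₂}` itself.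
With `K_{n₂}² = K_{n₂}` this gives `Cov(K_{n₁}, K_{n₂}) = E[∏ D_k] (1 - E K_{n₂}) E K_{n₂}`, and
`E[∏ D_k] = ∏ E[D_k] = ∏ (ν + α) q^{g(k)} / (1 + α)`.
-/

open MeasureTheory ProbabilityTheory

open Filter Topology

section Probability

variable {Ω : Type*} [MeasurableSpace Ω] {μ : Measure Ω}

lemma ProbabilityTheory.iIndep.indepFun_of_measurable_biSup {ι : Type*}
    {m : ι → MeasurableSpace Ω} (h_le : ∀ i, m i ≤ ‹MeasurableSpace Ω›) (h : iIndep m μ)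
    {S T : Set ι} (hST : Disjoint S T) {X Y : Ω → ℝ} (hX : Measurable[⨆ i ∈ S, m i] X)
    (hY : Measurable[⨆ i ∈ T, m i] Y) : IndepFun X Y μ := by
  rw [IndepFun_iff_Indep]
  exact indep_of_indep_of_le_right
    (indep_of_indep_of_le_left (indep_iSup_of_disjoint h_le h hST) hX.comap_le) hY.comap_le

lemma integral_mul_eq_mul_integral_of_tendsto [IsFiniteMeasure μ] {X Z : Ω → ℝ}
    {Y : ℕ → Ω → ℝ} {C D : ℝ} (hX : AEStronglyMeasurable X μ) (hXC : ∀ ω, |X ω| ≤ C)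
    (hY : ∀ N, AEStronglyMeasurable (Y N) μ) (hYD : ∀ N ω, |Y N ω| ≤ D)
    (hlim : ∀ᵐ ω ∂μ, Tendsto (Y · ω) atTop (𝓝 (Z ω))) (hXY : ∀ N, IndepFun X (Y N) μ) :
    ∫ ω, X ω * Z ω ∂μ = (∫ ω, X ω ∂μ) * ∫ ω, Z ω ∂μ := by
  have hXYlim : Tendsto (fun N => ∫ ω, X ω * Y N ω ∂μ) atTop (𝓝 (∫ ω, X ω * Z ω ∂μ)) :=
    tendsto_integral_of_dominated_convergence (fun _ => C * D) (fun N => hX.mul (hY N))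
      (integrable_const _) (fun N => ae_of_all μ fun ω => by
        rw [Real.norm_eq_abs, abs_mul]
        exact mul_le_mul (hXC ω) (hYD N ω) (abs_nonneg _) ((abs_nonneg _).trans (hXC ω)))
      (hlim.mono fun ω h => h.const_mul (X ω))
  have hYlim : Tendsto (fun N => ∫ ω, Y N ω ∂μ) atTop (𝓝 (∫ ω, Z ω ∂μ)) :=
    tendsto_integral_of_dominated_convergence (fun _ => D) hY (integrable_const _)
      (fun N => ae_of_all μ (hYD N)) hlim
  refine tendsto_nhds_unique (hXYlim.congr fun N => ?_) (hYlim.const_mul _)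
  exact (hXY N).integral_fun_mul_eq_mul_integral hX (hY N)

lemma ae_exists_le_notMem_of_iIndepSet {E : ℤ → Set Ω} (hE : iIndepSet E μ) {c : ENNReal}
    (hc : c < 1) (hEc : ∀ j, μ (E j) ≤ c) (n : ℤ) : ∀ᵐ ω ∂μ, ∃ j ≤ n, ω ∉ E j := by
  have hbad : ∀ N : ℕ, μ {ω | ¬∃ j ≤ n, ω ∉ E j} ≤ c ^ N := fun N =>
    calc μ {ω | ¬∃ j ≤ n, ω ∉ E j}
        ≤ μ (⋂ j ∈ Finset.Ioc (n - N) n, E j) := measure_mono fun ω hω => by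
          simp only [Set.mem_ofPred_eq, not_exists, not_and, not_not] at hω
          exact Set.mem_iInter₂.2 fun j hj => hω j (Finset.mem_Ioc.1 hj).2
      _ = ∏ j ∈ Finset.Ioc (n - N) n, μ (E j) := hE.meas_biInter _
      _ ≤ c ^ N := by
          have := Finset.prod_le_pow_card (Finset.Ioc (n - N) n) _ _ fun j _ => hEc j
          rwa [Int.card_Ioc, sub_sub_cancel, Int.toNat_natCast] at this
  rw [ae_iff]
  exact nonpos_iff_eq_zero.1
    (ge_of_tendsto' (ENNReal.tendsto_pow_atTop_nhds_zero_of_lt_one hc) hbad)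

lemma integral_eq_measureReal_of_zero_one {X : Ω → ℝ} (hX : Measurable X)
    (h01 : ∀ ω, X ω = 0 ∨ X ω = 1) : ∫ ω, X ω ∂μ = μ.real {ω | X ω = 1} :=
  calc ∫ ω, X ω ∂μ = ∫ ω, (X ⁻¹' {1}).indicator 1 ω ∂μ :=
        integral_congr_ae (ae_of_all _ fun ω => by rcases h01 ω with h | h <;> simp [h])
    _ = μ.real {ω | X ω = 1} := integral_indicator_one (hX (measurableSet_singleton 1))

lemma integral_sub_eq_of_zero_one [IsFiniteMeasure μ] {X Y : Ω → ℝ} (hX : Measurable X)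
    (hY : Measurable Y) (hX01 : ∀ ω, X ω = 0 ∨ X ω = 1) (hY01 : ∀ ω, Y ω = 0 ∨ Y ω = 1) :
    ∫ ω, (Y ω - X ω) ∂μ = μ.real {ω | Y ω = 1} - μ.real {ω | X ω = 1} := by
  have hint : ∀ {X : Ω → ℝ}, Measurable X → (∀ ω, X ω = 0 ∨ X ω = 1) → Integrable X μ :=
    fun hX h01 => .of_bound hX.aestronglyMeasurable 1 (.of_forall fun ω => by
      rcases h01 ω with h | h <;> simp [h])
  rw [integral_sub (hint hY hY01) (hint hX hX01), integral_eq_measureReal_of_zero_one hY hY01,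
    integral_eq_measureReal_of_zero_one hX hX01]

lemma measureReal_eq_zero_eq_one_sub [IsProbabilityMeasure μ] {X : Ω → ℝ} (hX : Measurable X)
    (h01 : ∀ ω, X ω = 0 ∨ X ω = 1) : μ.real {ω | X ω = 0} = 1 - μ.real {ω | X ω = 1} := by
  have hcompl : {ω | X ω = 0} = {ω | X ω = 1}ᶜ := by
    ext ω; rcases h01 ω with h | h <;> simp [h]
  rw [hcompl]
  exact probReal_compl_eq_one_sub (hX (measurableSet_singleton 1))

lemma measureReal_sub_ne_zero_le [IsProbabilityMeasure μ] {X Y : Ω → ℝ} (hX : Measurable X)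
    (hY : Measurable Y) (hXY : IndepFun X Y μ) :
    μ.real {ω | Y ω - X ω ≠ 0} ≤ 1 - μ.real {ω | X ω = 0} * μ.real {ω | Y ω = 0} := by
  have hboth : MeasurableSet (X ⁻¹' {0} ∩ Y ⁻¹' {0}) :=
    (hX (measurableSet_singleton 0)).inter (hY (measurableSet_singleton 0))
  calc μ.real {ω | Y ω - X ω ≠ 0} ≤ μ.real (X ⁻¹' {0} ∩ Y ⁻¹' {0})ᶜ :=
        measureReal_mono fun ω hω ⟨hX0, hY0⟩ => hω (by simp_all)
    _ = 1 - μ.real {ω | X ω = 0} * μ.real {ω | Y ω = 0} := by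
        rw [probReal_compl_eq_one_sub hboth, measureReal_def,
          hXY.measure_inter_preimage_eq_mul _ _ (measurableSet_singleton 0)
            (measurableSet_singleton 0), ENNReal.toReal_mul]
        rfl

lemma measureReal_sub_ne_zero_le_of_bernoulli [IsProbabilityMeasure μ] {X Y : Ω → ℝ}
    (hX : Measurable X) (hY : Measurable Y) (hXY : IndepFun X Y μ)
    (hX01 : ∀ ω, X ω = 0 ∨ X ω = 1) (hY01 : ∀ ω, Y ω = 0 ∨ Y ω = 1)
    {t ν α : ℝ} (ht0 : 0 ≤ t) (ht1 : t ≤ 1) (hν0 : 0 ≤ ν) (hν1 : ν ≤ 1) (hα : 0 < α)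
    (hXp : μ.real {ω | X ω = 1} = α * (1 - t) / (1 + α))
    (hYp : μ.real {ω | Y ω = 1} = (α + ν * t) / (1 + α)) :
    μ.real {ω | Y ω - X ω ≠ 0} ≤ 1 - (1 - ν) / (1 + α) ^ 2 := by
  refine (measureReal_sub_ne_zero_le hX hY hXY).trans ?_
  rw [measureReal_eq_zero_eq_one_sub hX hX01, measureReal_eq_zero_eq_one_sub hY hY01, hXp, hYp]
  have hα1 : 0 < 1 + α := by linarith
  have key : 1 - ν ≤ (1 + α * t) * (1 - ν * t) := by
    nlinarith [mul_nonneg hν0 (sub_nonneg.2 ht1), mul_nonneg (mul_nonneg hα.le ht0)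
      (sub_nonneg.2 (mul_le_one₀ hν1 ht0 ht1))]
  have hrw : (1 - α * (1 - t) / (1 + α)) * (1 - (α + ν * t) / (1 + α))
      = (1 + α * t) * (1 - ν * t) / (1 + α) ^ 2 := by
    field_simp
    ring
  rw [hrw]
  gcongr

end Probability

noncomputable def kpzPartial {Ω : Type*} (B B' : ℤ → Ω → ℝ) (m₀ n : ℤ) (ω : Ω) : ℝ :=
  ∑ m ∈ Finset.Icc m₀ n, (∏ j ∈ Finset.Icc (m + 1) n, (B' j ω - B j ω)) * B m ω

section Deterministic

variable {Ω : Type*} (B B' : ℤ → Ω → ℝ)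

lemma kpzPartial_of_lt {m₀ n : ℤ} (h : n < m₀) (ω : Ω) : kpzPartial B B' m₀ n ω = 0 := by
  rw [kpzPartial, Finset.Icc_eq_empty_of_lt h, Finset.sum_empty]

lemma kpzPartial_succ {m₀ n : ℤ} (h : m₀ ≤ n + 1) (ω : Ω) :
    kpzPartial B B' m₀ (n + 1) ω
      = (B' (n + 1) ω - B (n + 1) ω) * kpzPartial B B' m₀ n ω + B (n + 1) ω := by
  rw [kpzPartial, ← Finset.insert_Icc_right_eq_Icc_add_one h, Finset.sum_insert (by simp),
    Finset.Icc_eq_empty_of_lt (by omega), Finset.prod_empty, one_mul, add_comm, kpzPartial,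
    Finset.mul_sum]
  refine congrArg (· + _) (Finset.sum_congr rfl fun m hm => ?_)
  rw [← Finset.insert_Icc_right_eq_Icc_add_one (by simp at hm; omega),
    Finset.prod_insert (by simp)]
  ring

lemma kpzPartial_eq_zero_or_one (hB : ∀ m ω, B m ω = 0 ∨ B m ω = 1)
    (hB' : ∀ m ω, B' m ω = 0 ∨ B' m ω = 1) (m₀ n : ℤ) (ω : Ω) :
    kpzPartial B B' m₀ n ω = 0 ∨ kpzPartial B B' m₀ n ω = 1 := by
  rcases lt_or_ge n (m₀ - 1) with h | h
  · exact .inl (kpzPartial_of_lt B B' (by omega) ω)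
  induction n, h using Int.leInduction with
  | base => exact .inl (kpzPartial_of_lt B B' (by omega) ω)
  | succ n hn ih =>
    rw [kpzPartial_succ B B' (by omega)]
    rcases ih with h | h <;> rw [h]
    · simpa using hB (n + 1) ω
    · simpa using hB' (n + 1) ω

lemma abs_kpzPartial_le_one (hB : ∀ m ω, B m ω = 0 ∨ B m ω = 1)
    (hB' : ∀ m ω, B' m ω = 0 ∨ B' m ω = 1) (m₀ n : ℤ) (ω : Ω) :
    |kpzPartial B B' m₀ n ω| ≤ 1 := by
  rcases kpzPartial_eq_zero_or_one B B' hB hB' m₀ n ω with h | h <;> simp [h]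

lemma abs_prod_sub_le_one (hB : ∀ m ω, B m ω = 0 ∨ B m ω = 1)
    (hB' : ∀ m ω, B' m ω = 0 ∨ B' m ω = 1) (s : Finset ℤ) (ω : Ω) :
    |∏ k ∈ s, (B' k ω - B k ω)| ≤ 1 := by
  rw [Finset.abs_prod]
  refine Finset.prod_le_one (fun _ _ => abs_nonneg _) fun k _ => ?_
  rcases hB k ω with h | h <;> rcases hB' k ω with h' | h' <;> simp [h, h']

lemma kpzPartial_split {m₀ n₂ n₁ : ℤ} (h : m₀ ≤ n₂ + 1) (hn : n₂ ≤ n₁) (ω : Ω) :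
    kpzPartial B B' m₀ n₁ ω
      = (∏ k ∈ Finset.Icc (n₂ + 1) n₁, (B' k ω - B k ω)) * kpzPartial B B' m₀ n₂ ω
        + kpzPartial B B' (n₂ + 1) n₁ ω := by
  induction n₁, hn using Int.leInduction with
  | base => simp [kpzPartial_of_lt B B' (lt_add_one n₂)]
  | succ n hn ih =>
    rw [kpzPartial_succ B B' (by omega), kpzPartial_succ B B' (by omega), ih,
      ← Finset.insert_Icc_right_eq_Icc_add_one (by omega), Finset.prod_insert (by simp)]
    ring

lemma kpzKinf_eq_kpzPartial {n m₀ j : ℤ} {ω : Ω} (hm₀ : m₀ ≤ j) (hj : j ≤ n)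
    (hzero : B' j ω - B j ω = 0) : kpzKinf B B' n ω = kpzPartial B B' m₀ n ω := by
  refine (tsum_subtype {m : ℤ | m ≤ n}
      (fun m => (∏ j ∈ Finset.Icc (m + 1) n, (B' j ω - B j ω)) * B m ω)).trans ?_
  rw [tsum_eq_sum (s := Finset.Icc m₀ n)]
  · exact Finset.sum_congr rfl fun m hm =>
      Set.indicator_of_mem (show m ∈ {m : ℤ | m ≤ n} from (Finset.mem_Icc.1 hm).2) _
  intro m hm
  rcases le_or_gt m n with hmn | hmn
  · rw [Set.indicator_of_mem (show m ∈ {m : ℤ | m ≤ n} from hmn),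
      Finset.prod_eq_zero (i := j) _ hzero, zero_mul]
    simp only [Finset.mem_Icc] at hm ⊢
    omega
  · exact Set.indicator_of_notMem (show m ∉ {m : ℤ | m ≤ n} from not_le.2 hmn) _

end Deterministic

abbrev siteSigma {Ω : Type*} (B B' : ℤ → Ω → ℝ) (j : ℤ) : MeasurableSpace Ω :=
  .comap (B j) inferInstance ⊔ .comap (B' j) inferInstance

section Sites

variable {Ω : Type*} {B B' : ℤ → Ω → ℝ}

lemma measurable_siteSigma_sub (j : ℤ) :
    Measurable[siteSigma B B' j] fun ω => B' j ω - B j ω :=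
  (measurable_iff_comap_le.2 le_sup_right).sub (measurable_iff_comap_le.2 le_sup_left)

lemma measurable_biSup_siteSigma_fst {S : Set ℤ} {m : ℤ} (hm : m ∈ S) :
    Measurable[⨆ j ∈ S, siteSigma B B' j] (B m) :=
  measurable_iff_comap_le.2 <| le_sup_left.trans <| le_iSup₂ (f := fun j _ => siteSigma B B' j) m hm

lemma measurable_biSup_siteSigma_snd {S : Set ℤ} {m : ℤ} (hm : m ∈ S) :
    Measurable[⨆ j ∈ S, siteSigma B B' j] (B' m) :=
  measurable_iff_comap_le.2 <| le_sup_right.trans <| le_iSup₂ (f := fun j _ => siteSigma B B' j) m hm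

lemma measurable_biSup_siteSigma_prod_sub {S : Set ℤ} {s : Finset ℤ} (hs : ↑s ⊆ S) :
    Measurable[⨆ j ∈ S, siteSigma B B' j] fun ω => ∏ k ∈ s, (B' k ω - B k ω) :=
  Finset.measurable_prod _ fun _ hk =>
    (measurable_biSup_siteSigma_snd (hs hk)).sub (measurable_biSup_siteSigma_fst (hs hk))

lemma measurable_biSup_siteSigma_kpzPartial {S : Set ℤ} {m₀ n : ℤ} (hS : Set.Icc m₀ n ⊆ S) :
    Measurable[⨆ j ∈ S, siteSigma B B' j] (kpzPartial B B' m₀ n) := by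
  have hsub : ∀ m ∈ Finset.Icc m₀ n, ↑(Finset.Icc (m + 1) n) ⊆ S := fun m hm _ hk => by
    simp only [Finset.coe_Icc, Set.mem_Icc, Finset.mem_Icc] at hm hk
    exact hS ⟨by omega, hk.2⟩
  exact Finset.measurable_sum _ fun m hm =>
    (measurable_biSup_siteSigma_prod_sub (hsub m hm)).mul
      (measurable_biSup_siteSigma_fst (hS (by simpa using hm)))

variable [MeasurableSpace Ω] {μ : Measure Ω}

lemma siteSigma_le (hB : ∀ m, Measurable (B m)) (hB' : ∀ m, Measurable (B' m)) (j : ℤ) :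
    siteSigma B B' j ≤ ‹MeasurableSpace Ω› :=
  sup_le (hB j).comap_le (hB' j).comap_le

lemma iIndep_siteSigma (hindep : iIndepFun (Sum.elim B B') μ)
    (hB : ∀ m, Measurable (B m)) (hB' : ∀ m, Measurable (B' m)) :
    iIndep (siteSigma B B') μ := by
  have := hindep.isProbabilityMeasure
  have hle : ∀ i, MeasurableSpace.comap (Sum.elim B B' i) inferInstance ≤ ‹MeasurableSpace Ω› := by
    rintro (i | i)
    exacts [(hB i).comap_le, (hB' i).comap_le]
  have hblock : ∀ S : Set ℤ, ⨆ j ∈ S, siteSigma B B' j ≤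
      ⨆ i ∈ Sum.elim id id ⁻¹' S, MeasurableSpace.comap (Sum.elim B B' i) inferInstance :=
    fun S => iSup₂_le fun j hj =>
      sup_le (le_iSup₂_of_le (Sum.inl j) hj le_rfl) (le_iSup₂_of_le (Sum.inr j) hj le_rfl)
  rw [iIndep_iff]
  intro s f hf
  induction s using Finset.induction_on with
  | empty => simp
  | insert a s ha ih =>
    have hindep_a : Indep (⨆ j ∈ ({a} : Set ℤ), siteSigma B B' j)
        (⨆ j ∈ (s : Set ℤ), siteSigma B B' j) μ :=
      indep_of_indep_of_le_right (indep_of_indep_of_le_left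
        (indep_iSup_of_disjoint hle ((iIndepFun_iff_iIndep _ _ _).1 hindep)
          ((Set.disjoint_singleton_left.2 ha).preimage _)) (hblock _)) (hblock _)
    rw [Finset.set_biInter_insert, Finset.prod_insert ha,
      ← ih fun i hi => hf i (Finset.mem_insert_of_mem hi)]
    refine (Indep_iff _ _ _).1 hindep_a _ _ ?_ ?_
    · exact le_iSup₂ (f := fun j (_ : j ∈ ({a} : Set ℤ)) => siteSigma B B' j) a rfl _
        (hf a (Finset.mem_insert_self a s))
    · exact MeasurableSet.biInter s.countable_toSet fun i hi =>
        le_iSup₂ (f := fun j (_ : j ∈ (s : Set ℤ)) => siteSigma B B' j) i hi _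
          (hf i (Finset.mem_insert_of_mem hi))

lemma iIndepFun_sub (hsite : iIndep (siteSigma B B') μ) :
    iIndepFun (fun j ω => B' j ω - B j ω) μ :=
  (iIndepFun_iff_iIndep _ _ _).2 <|
    iIndep_of_iIndep_of_le hsite fun j => (measurable_siteSigma_sub j).comap_le

lemma integral_prod_sub (hB : ∀ m, Measurable (B m)) (hB' : ∀ m, Measurable (B' m))
    (hsite : iIndep (siteSigma B B') μ) (s : Finset ℤ) :
    ∫ ω, ∏ k ∈ s, (B' k ω - B k ω) ∂μ = ∏ k ∈ s, ∫ ω, (B' k ω - B k ω) ∂μ := by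
  have := ((iIndepFun_sub hsite).restrict s).integral_fun_prod_eq_prod_integral
    fun k => ((hB' k).sub (hB k)).aestronglyMeasurable
  simp only [Finset.restrict, Finset.univ_eq_attach] at this
  rw [← Finset.prod_attach s]
  simp_rw [← Finset.prod_attach s (fun k => B' k _ - B k _)]
  exact this

lemma ae_exists_sub_eq_zero [IsFiniteMeasure μ] (hsite : iIndep (siteSigma B B') μ) {c : ℝ}
    (hc : c < 1) (hbound : ∀ j, μ.real {ω | B' j ω - B j ω ≠ 0} ≤ c) (n : ℤ) :
    ∀ᵐ ω ∂μ, ∃ j ≤ n, B' j ω - B j ω = 0 := by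
  have hsets : iIndepSet (fun j => {ω | B' j ω - B j ω ≠ 0}) μ :=
    (iIndepSet_iff_iIndep _ _).2 <| iIndep_of_iIndep_of_le hsite fun j =>
      MeasurableSpace.generateFrom_le fun _ ht => by
        rw [Set.mem_singleton_iff.1 ht]
        exact (measurableSet_singleton 0).compl.preimage (measurable_siteSigma_sub j)
  simpa using ae_exists_le_notMem_of_iIndepSet hsets (ENNReal.ofReal_lt_one.2 hc)
    (fun j => by rw [← ofReal_measureReal]; exact ENNReal.ofReal_le_ofReal (hbound j)) n

variable {n : ℤ}

lemma ae_kpzKinf_eq_zero_or_one (hB01 : ∀ m ω, B m ω = 0 ∨ B m ω = 1)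
    (hB'01 : ∀ m ω, B' m ω = 0 ∨ B' m ω = 1) (hzero : ∀ᵐ ω ∂μ, ∃ j ≤ n, B' j ω - B j ω = 0) :
    ∀ᵐ ω ∂μ, kpzKinf B B' n ω = 0 ∨ kpzKinf B B' n ω = 1 := by
  filter_upwards [hzero] with ω ⟨j, hj, hD⟩
  rw [kpzKinf_eq_kpzPartial B B' le_rfl hj hD]
  exact kpzPartial_eq_zero_or_one B B' hB01 hB'01 j n ω

lemma ae_tendsto_kpzPartial (hzero : ∀ᵐ ω ∂μ, ∃ j ≤ n, B' j ω - B j ω = 0) :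
    ∀ᵐ ω ∂μ, Tendsto (fun N : ℕ => kpzPartial B B' (n - N) n ω) atTop
      (𝓝 (kpzKinf B B' n ω)) := by
  filter_upwards [hzero] with ω ⟨j, hj, hD⟩
  refine tendsto_const_nhds.congr' ?_
  filter_upwards [eventually_ge_atTop (n - j).toNat] with N hN
  exact kpzKinf_eq_kpzPartial B B' (by omega) hj hD

lemma ae_kpzKinf_eq_mul_add {n₁ : ℤ} (hn : n ≤ n₁)
    (hzero : ∀ᵐ ω ∂μ, ∃ j ≤ n, B' j ω - B j ω = 0) :
    ∀ᵐ ω ∂μ, kpzKinf B B' n₁ ω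
      = (∏ k ∈ Finset.Icc (n + 1) n₁, (B' k ω - B k ω)) * kpzKinf B B' n ω
        + kpzPartial B B' (n + 1) n₁ ω := by
  filter_upwards [hzero] with ω ⟨j, hj, hD⟩
  rw [kpzKinf_eq_kpzPartial B B' le_rfl (hj.trans hn) hD,
    kpzKinf_eq_kpzPartial B B' le_rfl hj hD]
  exact kpzPartial_split B B' (by omega) hn ω

lemma aestronglyMeasurable_kpzKinf (hB : ∀ m, Measurable (B m))
    (hB' : ∀ m, Measurable (B' m)) (hzero : ∀ᵐ ω ∂μ, ∃ j ≤ n, B' j ω - B j ω = 0) :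
    AEStronglyMeasurable (kpzKinf B B' n) μ :=
  aestronglyMeasurable_of_tendsto_ae atTop (fun _ =>
    ((measurable_biSup_siteSigma_kpzPartial subset_rfl).mono
      (iSup₂_le fun j _ => siteSigma_le hB hB' j) le_rfl).aestronglyMeasurable)
    (ae_tendsto_kpzPartial hzero)

lemma integrable_mul_kpzKinf [IsFiniteMeasure μ] (hB : ∀ m, Measurable (B m))
    (hB' : ∀ m, Measurable (B' m)) (hB01 : ∀ m ω, B m ω = 0 ∨ B m ω = 1)
    (hB'01 : ∀ m ω, B' m ω = 0 ∨ B' m ω = 1) (hzero : ∀ᵐ ω ∂μ, ∃ j ≤ n, B' j ω - B j ω = 0)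
    {X : Ω → ℝ} (hX : Measurable X) (hX1 : ∀ ω, |X ω| ≤ 1) :
    Integrable (fun ω => X ω * kpzKinf B B' n ω) μ :=
  .of_bound (hX.aestronglyMeasurable.mul (aestronglyMeasurable_kpzKinf hB hB' hzero)) 1 <|
    (ae_kpzKinf_eq_zero_or_one hB01 hB'01 hzero).mono fun ω h => by
      rw [Real.norm_eq_abs, abs_mul]
      exact mul_le_one₀ (hX1 ω) (abs_nonneg _) (by rcases h with h | h <;> simp [h])

lemma integral_mul_kpzKinf [IsFiniteMeasure μ] (hB : ∀ m, Measurable (B m))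
    (hB' : ∀ m, Measurable (B' m)) (hB01 : ∀ m ω, B m ω = 0 ∨ B m ω = 1)
    (hB'01 : ∀ m ω, B' m ω = 0 ∨ B' m ω = 1) (hsite : iIndep (siteSigma B B') μ)
    (hzero : ∀ᵐ ω ∂μ, ∃ j ≤ n, B' j ω - B j ω = 0) {X : Ω → ℝ} {C : ℝ}
    (hX : Measurable[⨆ j ∈ Set.Ioi n, siteSigma B B' j] X) (hXC : ∀ ω, |X ω| ≤ C) :
    ∫ ω, X ω * kpzKinf B B' n ω ∂μ = (∫ ω, X ω ∂μ) * ∫ ω, kpzKinf B B' n ω ∂μ := by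
  have hle : ∀ S : Set ℤ, ⨆ j ∈ S, siteSigma B B' j ≤ ‹MeasurableSpace Ω› :=
    fun S => iSup₂_le fun j _ => siteSigma_le hB hB' j
  refine integral_mul_eq_mul_integral_of_tendsto (hX.mono (hle _) le_rfl).aestronglyMeasurable
    hXC (fun N => ((measurable_biSup_siteSigma_kpzPartial subset_rfl).mono (hle _)
      le_rfl).aestronglyMeasurable)
    (fun N => abs_kpzPartial_le_one B B' hB01 hB'01 _ _) (ae_tendsto_kpzPartial hzero)
    fun N => ?_
  refine hsite.indepFun_of_measurable_biSup (siteSigma_le hB hB') ?_ hX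
    (measurable_biSup_siteSigma_kpzPartial subset_rfl)
  exact Set.disjoint_left.2 fun j hj hj' => not_lt.2 hj'.2 hj

lemma kpzKinf_covariance_eq [IsFiniteMeasure μ] (hB : ∀ m, Measurable (B m))
    (hB' : ∀ m, Measurable (B' m)) (hB01 : ∀ m ω, B m ω = 0 ∨ B m ω = 1)
    (hB'01 : ∀ m ω, B' m ω = 0 ∨ B' m ω = 1) (hsite : iIndep (siteSigma B B') μ) {n₁ : ℤ}
    (hn : n ≤ n₁) (hzero : ∀ᵐ ω ∂μ, ∃ j ≤ n, B' j ω - B j ω = 0) :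
    (∫ ω, kpzKinf B B' n₁ ω * kpzKinf B B' n ω ∂μ)
        - (∫ ω, kpzKinf B B' n₁ ω ∂μ) * (∫ ω, kpzKinf B B' n ω ∂μ) =
      (∫ ω, ∏ k ∈ Finset.Icc (n + 1) n₁, (B' k ω - B k ω) ∂μ) *
        (1 - ∫ ω, kpzKinf B B' n ω ∂μ) * (∫ ω, kpzKinf B B' n ω ∂μ) := by
  set K := kpzKinf B B' n
  set P := fun ω => ∏ k ∈ Finset.Icc (n + 1) n₁, (B' k ω - B k ω)
  set S := kpzPartial B B' (n + 1) n₁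
  have hle : ⨆ j ∈ Set.Ioi n, siteSigma B B' j ≤ ‹MeasurableSpace Ω› :=
    iSup₂_le fun j _ => siteSigma_le hB hB' j
  have hsub : ↑(Finset.Icc (n + 1) n₁) ⊆ Set.Ioi n := fun k hk => by
    simp only [Finset.coe_Icc, Set.mem_Icc, Set.mem_Ioi] at hk ⊢; omega
  have hP : Measurable[⨆ j ∈ Set.Ioi n, siteSigma B B' j] P :=
    measurable_biSup_siteSigma_prod_sub hsub
  have hS : Measurable[⨆ j ∈ Set.Ioi n, siteSigma B B' j] S :=
    measurable_biSup_siteSigma_kpzPartial (by simpa using hsub)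
  have hP1 : ∀ ω, |P ω| ≤ 1 := abs_prod_sub_le_one B B' hB01 hB'01 _
  have hS1 : ∀ ω, |S ω| ≤ 1 := abs_kpzPartial_le_one B B' hB01 hB'01 _ _
  have hPKint := integrable_mul_kpzKinf hB hB' hB01 hB'01 hzero (hP.mono hle le_rfl) hP1
  have hSKint := integrable_mul_kpzKinf hB hB' hB01 hB'01 hzero (hS.mono hle le_rfl) hS1
  have hPK := integral_mul_kpzKinf hB hB' hB01 hB'01 hsite hzero hP hP1
  have hSK := integral_mul_kpzKinf hB hB' hB01 hB'01 hsite hzero hS hS1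
  have hdecomp : ∀ᵐ ω ∂μ, kpzKinf B B' n₁ ω = P ω * K ω + S ω :=
    ae_kpzKinf_eq_mul_add hn hzero
  have hmean : ∫ ω, kpzKinf B B' n₁ ω ∂μ = (∫ ω, P ω ∂μ) * (∫ ω, K ω ∂μ) + ∫ ω, S ω ∂μ := by
    rw [integral_congr_ae hdecomp, integral_add hPKint
      (.of_bound (hS.mono hle le_rfl).aestronglyMeasurable 1 (.of_forall hS1)), hPK]
  have hsecond : ∫ ω, kpzKinf B B' n₁ ω * K ω ∂μ
      = (∫ ω, P ω ∂μ) * (∫ ω, K ω ∂μ) + (∫ ω, S ω ∂μ) * ∫ ω, K ω ∂μ := by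
    have hsq : ∀ᵐ ω ∂μ, kpzKinf B B' n₁ ω * K ω = P ω * K ω + S ω * K ω := by
      filter_upwards [hdecomp, ae_kpzKinf_eq_zero_or_one hB01 hB'01 hzero] with ω h h01
      rw [h]
      rcases h01 with h | h <;> simp [K, h]
    rw [integral_congr_ae hsq, integral_add hPKint hSKint, hPK, hSK]
  rw [hsecond, hmean]
  ring

end Sites

/-- With `B_m ~ Ber(α(1−q^{g(m)})/(1+α))`, `B'_m ~ Ber((α+νq^{g(m)})/(1+α))`
all mutually independent, for all `n₁ ≥ n₂`,
`Cov(K_{n₁}, K_{n₂}) = (∏_{k=n₂+1}^{n₁} ((ν+α)q^{g(k)})/(1+α)) · (1 − E(K_{n₂})) · E(K_{n₂})`. -/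
theorem kpz_K_covariance
    {Ω : Type*} [MeasurableSpace Ω] (μ : Measure Ω) [IsProbabilityMeasure μ]
    (q ν α : ℝ) (hq0 : 0 < q) (hq1 : q < 1) (hν0 : 0 ≤ ν) (hν1 : ν < 1) (hα : 0 < α)
    (g : ℤ → ℕ)
    (B B' : ℤ → Ω → ℝ)
    (hBmeas : ∀ m, Measurable (B m)) (hB'meas : ∀ m, Measurable (B' m))
    (hB01 : ∀ m ω, B m ω = 0 ∨ B m ω = 1)
    (hB'01 : ∀ m ω, B' m ω = 0 ∨ B' m ω = 1)
    (hBp : ∀ m, μ {ω | B m ω = 1} = ENNReal.ofReal (α * (1 - q ^ g m) / (1 + α)))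
    (hB'p : ∀ m, μ {ω | B' m ω = 1} = ENNReal.ofReal ((α + ν * q ^ g m) / (1 + α)))
    (hindep : iIndepFun (Sum.elim B B') μ)
    (n₁ n₂ : ℤ) (hn : n₂ ≤ n₁) :
    (∫ ω, kpzKinf B B' n₁ ω * kpzKinf B B' n₂ ω ∂μ)
        - (∫ ω, kpzKinf B B' n₁ ω ∂μ) * (∫ ω, kpzKinf B B' n₂ ω ∂μ) =
      (∏ k ∈ Finset.Icc (n₂ + 1) n₁, ((ν + α) * q ^ g k) / (1 + α)) *
        (1 - ∫ ω, kpzKinf B B' n₂ ω ∂μ) * (∫ ω, kpzKinf B B' n₂ ω ∂μ) := by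
  have hq_le : ∀ m, q ^ g m ≤ 1 := fun m => pow_le_one₀ hq0.le hq1.le
  have hBp' : ∀ m, μ.real {ω | B m ω = 1} = α * (1 - q ^ g m) / (1 + α) := fun m => by
    rw [measureReal_def, hBp, ENNReal.toReal_ofReal]
    exact div_nonneg (mul_nonneg hα.le (sub_nonneg.2 (hq_le m))) (by linarith)
  have hB'p' : ∀ m, μ.real {ω | B' m ω = 1} = (α + ν * q ^ g m) / (1 + α) := fun m => by
    rw [measureReal_def, hB'p, ENNReal.toReal_ofReal (by positivity)]
  have hsite := iIndep_siteSigma hindep hBmeas hB'meas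
  have hzero := ae_exists_sub_eq_zero hsite (sub_lt_self 1 (by have := sub_pos.2 hν1; positivity))
    (fun j => measureReal_sub_ne_zero_le_of_bernoulli (hBmeas j) (hB'meas j)
      (hindep.indepFun Sum.inl_ne_inr) (hB01 j) (hB'01 j) (by positivity) (hq_le j) hν0 hν1.le
      hα (hBp' j) (hB'p' j)) n₂
  rw [kpzKinf_covariance_eq hBmeas hB'meas hB01 hB'01 hsite hn hzero,
    integral_prod_sub hBmeas hB'meas hsite]
  congr 2
  refine Finset.prod_congr rfl fun k _ => ?_
  rw [integral_sub_eq_of_zero_one (hBmeas k) (hB'meas k) (hB01 k) (hB'01 k), hBp', hB'p']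
  ring
end

section
/- Fix q ∈ [0,1), ν ∈ [0,1), ᾱ > 0 and ρ ∈ (0,1), and let f be the tilted step distribution with parameters (q, ᾱ, ν, ρ). Then f(n) ≥ 0 for all n ∈ ℕ and Σ_{n∈ℕ} f(n) = 1; that is, f is a probability mass function on ℕ. -/
/-- The step distribution with parameters `(q, ᾱ, ν)`:
`p(0) = 1 − ᾱ(1−q)/(1+ᾱ)` and
`p(n) = (ᾱ(1−q)(1−ν)/(1+ᾱ)²)·((ν+ᾱ)/(1+ᾱ))^{n−1}` for `n ≥ 1`. -/
noncomputable def stepDist (q a ν : ℝ) : ℕ → ℝ := fun n =>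
  if n = 0 then 1 - a * (1 - q) / (1 + a)
  else (a * (1 - q) * (1 - ν) / (1 + a) ^ 2) * ((ν + a) / (1 + a)) ^ (n - 1)

/-- The tilted step distribution with parameters `(q, ᾱ, ν, ρ)`:
`f(n) = λ ρ^n p(n)` where `γ = (1−ρ)/(1−νρ)` and `λ = (1+ᾱγ)/(1+qᾱγ)`. -/
noncomputable def tiltedStepDist (q a ν ρ : ℝ) : ℕ → ℝ := fun n =>
  ((1 + a * ((1 - ρ) / (1 - ν * ρ))) / (1 + q * a * ((1 - ρ) / (1 - ν * ρ)))) *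
    ρ ^ n * stepDist q a ν n

/-! Past `n = 0` the step distribution is geometric with ratio `(ν+ᾱ)/(1+ᾱ) < 1`, so its
generating function `∑ ρⁿ p(n)` sums to `(1 − νρ + qᾱ(1−ρ)) / (1 − νρ + ᾱ(1−ρ))`. Dividing
numerator and denominator by `1 − νρ` shows this is `(1 + qᾱγ)/(1 + ᾱγ) = 1/λ`: the constant `λ`
is exactly the normaliser of the exponential tilt `ρⁿ p(n)`. -/

theorem hasSum_of_succ_eq_mul_geometric {u : ℕ → ℝ} {c r : ℝ}
    (hsucc : ∀ n, u (n + 1) = c * r ^ n) (hr : |r| < 1) :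
    HasSum u (u 0 + c * (1 - r)⁻¹) :=
  HasSum.zero_add <| by
    simpa only [hsucc] using (hasSum_geometric_of_abs_lt_one hr).mul_left c

section stepDist

variable {q a ν : ℝ}

@[simp]
theorem stepDist_zero : stepDist q a ν 0 = 1 - a * (1 - q) / (1 + a) := rfl

@[simp]
theorem stepDist_succ (n : ℕ) :
    stepDist q a ν (n + 1) = a * (1 - q) * (1 - ν) / (1 + a) ^ 2 * ((ν + a) / (1 + a)) ^ n := by
  simp [stepDist]

theorem stepDist_nonneg (hq0 : 0 ≤ q) (hq1 : q ≤ 1) (hν0 : 0 ≤ ν) (hν1 : ν ≤ 1) (ha : 0 ≤ a)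
    (n : ℕ) :
    0 ≤ stepDist q a ν n := by
  cases n with
  | zero =>
    have : a * (1 - q) / (1 + a) ≤ 1 := by
      rw [div_le_one (by linarith)]; nlinarith
    simpa using this
  | succ n =>
    rw [stepDist_succ]
    have : 0 ≤ 1 - q := by linarith
    have : 0 ≤ 1 - ν := by linarith
    positivity

theorem hasSum_pow_mul_stepDist (h1a : 1 + a ≠ 0) {ρ : ℝ} (hρ : |ρ * ((ν + a) / (1 + a))| < 1) :
    HasSum (fun n => ρ ^ n * stepDist q a ν n)
      ((1 - ν * ρ + q * a * (1 - ρ)) / (1 - ν * ρ + a * (1 - ρ))) := by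
  have hratio : 1 - ρ * ((ν + a) / (1 + a)) = (1 - ν * ρ + a * (1 - ρ)) / (1 + a) := by
    field_simp; ring
  have hD : 1 - ν * ρ + a * (1 - ρ) ≠ 0 := by
    have := sub_ne_zero.mpr (abs_lt.mp hρ).2.ne'
    rw [hratio] at this
    exact left_ne_zero_of_mul this
  convert hasSum_of_succ_eq_mul_geometric (u := fun n => ρ ^ n * stepDist q a ν n)
    (c := ρ * (a * (1 - q) * (1 - ν) / (1 + a) ^ 2))
    (fun n => by rw [stepDist_succ, pow_succ, mul_pow]; ring) hρ using 1
  rw [hratio, pow_zero, one_mul, stepDist_zero]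
  field_simp
  ring

end stepDist

theorem tiltedStepDist_const_mul_eq_one {q a ν ρ : ℝ} (h : 1 - ν * ρ ≠ 0)
    (hN : 1 - ν * ρ + q * a * (1 - ρ) ≠ 0) (hD : 1 - ν * ρ + a * (1 - ρ) ≠ 0) :
    (1 + a * ((1 - ρ) / (1 - ν * ρ))) / (1 + q * a * ((1 - ρ) / (1 - ν * ρ))) *
      ((1 - ν * ρ + q * a * (1 - ρ)) / (1 - ν * ρ + a * (1 - ρ))) = 1 := by
  rw [← mul_div_mul_right _ (1 + _) h, add_mul, add_mul, mul_assoc, div_mul_cancel₀ _ h,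
    mul_assoc (q * a), div_mul_cancel₀ _ h, one_mul, div_mul_div_cancel₀ hN, div_self hD]

/-- For `q ∈ [0,1)`, `ν ∈ [0,1)`, `ᾱ > 0`, `ρ ∈ (0,1)`, the tilted step
distribution is a probability mass function on `ℕ`. -/
theorem tiltedStepDist_isPMF (q ν a ρ : ℝ)
    (hq0 : 0 ≤ q) (hq1 : q < 1) (hν0 : 0 ≤ ν) (hν1 : ν < 1) (ha : 0 < a)
    (hρ0 : 0 < ρ) (hρ1 : ρ < 1) :
    (∀ n : ℕ, 0 ≤ tiltedStepDist q a ν ρ n) ∧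
    (∑' n : ℕ, tiltedStepDist q a ν ρ n) = 1 := by
  have hνρ : 0 < 1 - ν * ρ := by nlinarith
  have hp := stepDist_nonneg hq0 hq1.le hν0 hν1.le ha.le
  refine ⟨fun n => by have := hp n; unfold tiltedStepDist; positivity, ?_⟩
  have hratio : |ρ * ((ν + a) / (1 + a))| < 1 := by
    rw [abs_of_nonneg (by positivity), ← mul_div_assoc, div_lt_one (by positivity)]
    nlinarith
  have hN : 0 < 1 - ν * ρ + q * a * (1 - ρ) :=
    add_pos_of_pos_of_nonneg hνρ (mul_nonneg (mul_nonneg hq0 ha.le) (by linarith))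
  have hD : 0 < 1 - ν * ρ + a * (1 - ρ) := add_pos hνρ (mul_pos ha (by linarith))
  have hsum := (hasSum_pow_mul_stepDist (q := q) (by positivity) hratio).mul_left
    ((1 + a * ((1 - ρ) / (1 - ν * ρ))) / (1 + q * a * ((1 - ρ) / (1 - ν * ρ))))
  rw [tiltedStepDist_const_mul_eq_one hνρ.ne' hN.ne' hD.ne'] at hsum
  simpa only [tiltedStepDist, mul_assoc] using hsum.tsum_eq
end

section
/- Fix q ∈ [0,1), ν ∈ [0,1), ᾱ > 0 and ρ ∈ (0,1), and let f be the tilted step distribution with parameters (q, ᾱ, ν, ρ). Set γ = (1−ρ)/(1−νρ), A = ᾱγ/(1+ᾱγ), A_q = qᾱγ/(1+qᾱγ), b = γ/(1−γ), b' = νγ/(1−νγ), μ = (A − A_q)/(b − b') and σ = A² − A_q² + (A − A_q)(b + b'). Then the second moment of f satisfies Σ_{n∈ℕ} n²·f(n) = μ² + σ/(b − b')²; equivalently, the variance of f equals σ/(b − b')². -/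
theorem hasSum_succ_sq_mul_geometric {𝕜 : Type*} [NormedField 𝕜] [HasSummableGeomSeries 𝕜]
    {x : 𝕜} (hx : ‖x‖ < 1) :
    HasSum (fun n : ℕ => ((n : 𝕜) + 1) ^ 2 * x ^ n) ((1 + x) / (1 - x) ^ 3) := by
  have hx1 : 1 - x ≠ 0 := (isUnit_one_sub_of_norm_lt_one hx).ne_zero
  have hsum := ((hasSum_choose_mul_geometric_of_norm_lt_one 2 hx).mul_left 2).sub
    (hasSum_choose_mul_geometric_of_norm_lt_one 1 hx)
  have hterm (n : ℕ) : ((n : 𝕜) + 1) ^ 2 * x ^ n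
      = 2 * (((n + 2).choose 2 : ℕ) * x ^ n) - ((n + 1).choose 1 : ℕ) * x ^ n := by
    have hchoose : (((n + 2).choose 2 : ℕ) : 𝕜) * 2 = (n + 2) * (n + 1) := by
      have h : (n + 2).choose 2 * 2 = (n + 2) * (n + 1) := by
        simpa using ((n + 1).add_one_mul_choose_eq 1).symm
      simpa using congrArg (Nat.cast : ℕ → 𝕜) h
    rw [Nat.choose_one_right]
    push_cast
    linear_combination (-x ^ n) * hchoose
  have hvalue : (1 + x) / (1 - x) ^ 3 = 2 * (1 / (1 - x) ^ (2 + 1)) - 1 / (1 - x) ^ (1 + 1) := by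
    field_simp
    ring
  simpa only [hterm, hvalue] using hsum

noncomputable def tiltRatio (a ν ρ : ℝ) : ℝ := ρ * ((ν + a) / (1 + a))

theorem tiltedStepDist_succ (q a ν ρ : ℝ) (n : ℕ) :
    tiltedStepDist q a ν ρ (n + 1) = tiltedStepDist q a ν ρ 1 * tiltRatio a ν ρ ^ n := by
  simp only [tiltedStepDist, stepDist, tiltRatio, Nat.add_one_ne_zero, if_false,
    Nat.add_sub_cancel, Nat.sub_self, mul_pow]
  ring

theorem hasSum_sq_mul_tiltedStepDist {q a ν ρ : ℝ} (hr : ‖tiltRatio a ν ρ‖ < 1) :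
    HasSum (fun n : ℕ => (n : ℝ) ^ 2 * tiltedStepDist q a ν ρ n)
      (tiltedStepDist q a ν ρ 1 * ((1 + tiltRatio a ν ρ) / (1 - tiltRatio a ν ρ) ^ 3)) := by
  rw [← hasSum_nat_add_iff' 1, Finset.sum_range_one, Nat.cast_zero, zero_pow two_ne_zero,
    zero_mul, sub_zero]
  refine ((hasSum_succ_sq_mul_geometric hr).mul_left (tiltedStepDist q a ν ρ 1)).congr_fun
    fun n => ?_
  rw [tiltedStepDist_succ, Nat.cast_succ]
  ring

section Parameters

variable {q a ν ρ γ A Aq b b' : ℝ}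

theorem norm_tiltRatio_lt_one (hν0 : 0 ≤ ν) (hν1 : ν < 1) (ha : 0 ≤ a) (hρ0 : 0 ≤ ρ)
    (hρ1 : ρ < 1) : ‖tiltRatio a ν ρ‖ < 1 := by
  have h1a : 0 < 1 + a := by linarith
  rw [tiltRatio, Real.norm_of_nonneg (by positivity), mul_div_assoc', div_lt_one h1a]
  nlinarith

theorem one_sub_div_one_sub_mul_mem_Ioo (hν1 : ν < 1) (hρ0 : 0 < ρ) (hρ1 : ρ < 1) :
    (1 - ρ) / (1 - ν * ρ) ∈ Set.Ioo 0 1 := by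
  have hρνρ : 1 - ρ < 1 - ν * ρ := by nlinarith
  exact ⟨div_pos (by linarith) (by linarith), (div_lt_one (by linarith)).2 hρνρ⟩

theorem tiltedStepDist_one (hγ : γ = (1 - ρ) / (1 - ν * ρ)) :
    tiltedStepDist q a ν ρ 1 =
      (1 + a * γ) / (1 + q * a * γ) * ρ * (a * (1 - q) * (1 - ν) / (1 + a) ^ 2) := by
  simp only [tiltedStepDist, stepDist, ← hγ, one_ne_zero, if_false, Nat.sub_self, pow_zero,
    pow_one, mul_one]

theorem eq_one_sub_div_one_sub_mul_symm (hνρ : 1 - ν * ρ ≠ 0) (hνγ : 1 - ν * γ ≠ 0)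
    (hγ : γ = (1 - ρ) / (1 - ν * ρ)) : ρ = (1 - γ) / (1 - ν * γ) := by
  rw [eq_div_iff hνρ] at hγ
  rw [eq_div_iff hνγ]
  linear_combination hγ

theorem one_sub_tiltRatio_eq (h1a : 1 + a ≠ 0) (hνγ : 1 - ν * γ ≠ 0)
    (hρ : ρ = (1 - γ) / (1 - ν * γ)) :
    1 - tiltRatio a ν ρ = (1 - ν) * (1 + a * γ) / ((1 + a) * (1 - ν * γ)) := by
  rw [tiltRatio, hρ, div_mul_div_comm, one_sub_div (mul_ne_zero hνγ h1a),
    div_eq_div_iff (mul_ne_zero hνγ h1a) (mul_ne_zero h1a hνγ)]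
  ring

theorem div_one_sub_sub_mul_div_one_sub_mul (h1γ : 1 - γ ≠ 0) (hνγ : 1 - ν * γ ≠ 0) :
    γ / (1 - γ) - ν * γ / (1 - ν * γ) = γ * (1 - ν) / ((1 - γ) * (1 - ν * γ)) := by
  rw [div_sub_div _ _ h1γ hνγ]
  ring

theorem mean_mul_one_sub_tiltRatio_sq (hq0 : 0 ≤ q) (hν1 : ν < 1) (ha : 0 < a) (hγ0 : 0 < γ)
    (hγ1 : γ < 1) (hρ : ρ = (1 - γ) / (1 - ν * γ)) (hA : A = a * γ / (1 + a * γ))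
    (hAq : Aq = q * a * γ / (1 + q * a * γ)) (hb : b = γ / (1 - γ))
    (hb' : b' = ν * γ / (1 - ν * γ)) :
    (A - Aq) / (b - b') * (1 - tiltRatio a ν ρ) ^ 2 =
      (1 + a * γ) / (1 + q * a * γ) * ρ * (a * (1 - q) * (1 - ν) / (1 + a) ^ 2) := by
  have hνγ : 0 < 1 - ν * γ := by nlinarith
  have h1γ : 0 < 1 - γ := by linarith
  have h1a : 0 < 1 + a := by linarith
  have haγ : 0 < 1 + a * γ := by positivity
  have hqaγ : 0 < 1 + q * a * γ := by positivity
  have hAAq : A - Aq = a * γ * (1 - q) / ((1 + a * γ) * (1 + q * a * γ)) := by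
    rw [hA, hAq, div_sub_div _ _ haγ.ne' hqaγ.ne']
    ring
  rw [hAAq, hb, hb', div_one_sub_sub_mul_div_one_sub_mul h1γ.ne' hνγ.ne',
    one_sub_tiltRatio_eq h1a.ne' hνγ.ne' hρ, hρ]
  field_simp

theorem one_add_tiltRatio_div_one_sub (hν1 : ν < 1) (ha : 0 < a) (hγ0 : 0 < γ) (hγ1 : γ < 1)
    (hρ : ρ = (1 - γ) / (1 - ν * γ)) (hA : A = a * γ / (1 + a * γ)) (hb : b = γ / (1 - γ))
    (hb' : b' = ν * γ / (1 - ν * γ)) :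
    (1 + tiltRatio a ν ρ) / (1 - tiltRatio a ν ρ) = (2 * A + b + b') / (b - b') := by
  have hνγ : 0 < 1 - ν * γ := by nlinarith
  have h1γ : 0 < 1 - γ := by linarith
  have h1a : 0 < 1 + a := by linarith
  have haγ : 0 < 1 + a * γ := by positivity
  have h1r := one_sub_tiltRatio_eq h1a.ne' hνγ.ne' hρ
  have hbb' : b - b' = γ * (1 - ν) / ((1 - γ) * (1 - ν * γ)) := by
    rw [hb, hb', div_one_sub_sub_mul_div_one_sub_mul h1γ.ne' hνγ.ne']
  have hAb : A + b = γ * (1 + a) / ((1 + a * γ) * (1 - γ)) := by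
    rw [hA, hb, div_add_div _ _ haγ.ne' h1γ.ne']
    ring
  have key : (1 - tiltRatio a ν ρ) * (A + b) = b - b' := by
    rw [h1r, hAb, hbb']
    field_simp
  rw [div_eq_div_iff (h1r ▸ by positivity) (hbb' ▸ by positivity)]
  linear_combination -2 * key

end Parameters

theorem tiltedStepDist_second_moment_general (q ν a ρ γ A Aq b b' μ σ : ℝ)
    (hq0 : 0 ≤ q) (hν0 : 0 ≤ ν) (hν1 : ν < 1) (ha : 0 < a)
    (hρ0 : 0 < ρ) (hρ1 : ρ < 1)
    (hγ : γ = (1 - ρ) / (1 - ν * ρ))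
    (hA : A = a * γ / (1 + a * γ)) (hAq : Aq = q * a * γ / (1 + q * a * γ))
    (hb : b = γ / (1 - γ)) (hb' : b' = ν * γ / (1 - ν * γ))
    (hμ : μ = (A - Aq) / (b - b'))
    (hσ : σ = A ^ 2 - Aq ^ 2 + (A - Aq) * (b + b')) :
    (∑' n : ℕ, (n : ℝ) ^ 2 * tiltedStepDist q a ν ρ n) = μ ^ 2 + σ / (b - b') ^ 2 := by
  obtain ⟨hγ0, hγ1⟩ : γ ∈ Set.Ioo 0 1 := hγ ▸ one_sub_div_one_sub_mul_mem_Ioo hν1 hρ0 hρ1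
  have hρ : ρ = (1 - γ) / (1 - ν * γ) :=
    eq_one_sub_div_one_sub_mul_symm (by nlinarith) (by nlinarith) hγ
  have hr := norm_tiltRatio_lt_one hν0 hν1 ha.le hρ0.le hρ1
  have h1r : 1 - tiltRatio a ν ρ ≠ 0 := (sub_pos.2 ((le_abs_self _).trans_lt hr)).ne'
  rw [(hasSum_sq_mul_tiltedStepDist hr).tsum_eq, tiltedStepDist_one hγ,
    ← mean_mul_one_sub_tiltRatio_sq hq0 hν1 ha hγ0 hγ1 hρ hA hAq hb hb', hμ, hσ]
  calc (A - Aq) / (b - b') * (1 - tiltRatio a ν ρ) ^ 2 *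
        ((1 + tiltRatio a ν ρ) / (1 - tiltRatio a ν ρ) ^ 3)
      = (A - Aq) / (b - b') * ((1 + tiltRatio a ν ρ) / (1 - tiltRatio a ν ρ)) := by
        field_simp
    _ = (A - Aq) / (b - b') * ((2 * A + b + b') / (b - b')) := by
        rw [one_add_tiltRatio_div_one_sub hν1 ha hγ0 hγ1 hρ hA hb hb']
    _ = ((A - Aq) / (b - b')) ^ 2 + (A ^ 2 - Aq ^ 2 + (A - Aq) * (b + b')) / (b - b') ^ 2 := by
        rw [div_pow, ← add_div, div_mul_div_comm, ← sq]
        ring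

/-- With `γ = (1−ρ)/(1−νρ)`, `A = ᾱγ/(1+ᾱγ)`, `A_q = qᾱγ/(1+qᾱγ)`,
`b = γ/(1−γ)`, `b' = νγ/(1−νγ)`, `μ = (A − A_q)/(b − b')` and
`σ = A² − A_q² + (A − A_q)(b + b')`, the second moment of the tilted step distribution
equals `μ² + σ/(b − b')²`. -/
theorem tiltedStepDist_second_moment (q ν a ρ γ A Aq b b' μ σ : ℝ)
    (hq0 : 0 ≤ q) (hq1 : q < 1) (hν0 : 0 ≤ ν) (hν1 : ν < 1) (ha : 0 < a)
    (hρ0 : 0 < ρ) (hρ1 : ρ < 1)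
    (hγ : γ = (1 - ρ) / (1 - ν * ρ))
    (hA : A = a * γ / (1 + a * γ)) (hAq : Aq = q * a * γ / (1 + q * a * γ))
    (hb : b = γ / (1 - γ)) (hb' : b' = ν * γ / (1 - ν * γ))
    (hμ : μ = (A - Aq) / (b - b'))
    (hσ : σ = A ^ 2 - Aq ^ 2 + (A - Aq) * (b + b')) :
    (∑' n : ℕ, (n : ℝ) ^ 2 * tiltedStepDist q a ν ρ n) = μ ^ 2 + σ / (b - b') ^ 2 :=
  tiltedStepDist_second_moment_general q ν a ρ γ A Aq b b' μ σ hq0 hν0 hν1 ha hρ0 hρ1 hγ hA hAq hb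
    hb' hμ hσ
end

section
/- Let f : ℕ → ℝ be a probability mass function on ℕ (f(n) ≥ 0 for all n and Σ_{n∈ℕ} f(n) = 1) satisfying f(0) ≥ f(1). Then for every real r, the characteristic function satisfies |Σ_{n∈ℕ} f(n) e^{i r n}| ≤ f(1)·|1 + e^{i r}| + (1 − 2 f(1)); equivalently, |Σ_{n∈ℕ} f(n) e^{i r n}| ≤ 1 − 2 f(1)(1 − |cos(r/2)|). -/
/-!
Split off the first two terms of the series. Since `f 0 ≥ f 1`, the head
`f 0 + f 1 e^{ir} = (f 0 - f 1) + f 1 (1 + e^{ir})` has norm at most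
`f 0 - f 1 + f 1 |1 + e^{ir}|`, while the tail has norm at most its mass `1 - f 0 - f 1`.
-/

open Complex

theorem norm_tsum_le_norm_sum_range_add_tsum_norm {E : Type*} [NormedAddCommGroup E]
    [CompleteSpace E] {g : ℕ → E} (hg : Summable (‖g ·‖)) (k : ℕ) :
    ‖∑' n, g n‖ ≤ ‖∑ i ∈ Finset.range k, g i‖ + ∑' n, ‖g (n + k)‖ := by
  rw [← (Summable.of_norm hg).sum_add_tsum_nat_add k]
  have htail : Summable fun n ↦ ‖g (n + k)‖ := (summable_nat_add_iff k).mpr hg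
  exact (norm_add_le _ _).trans (add_le_add_right (norm_tsum_le_tsum_norm htail) _)

theorem norm_ofReal_mul_exp_I_mul_nat (a r : ℝ) (n : ℕ) :
    ‖(a : ℂ) * exp (I * r * n)‖ = |a| := by
  have harg : I * r * n = I * ((r * n : ℝ) : ℂ) := by push_cast; ring
  rw [norm_mul, harg, norm_exp_I_mul_ofReal, norm_real, Real.norm_eq_abs, mul_one]

theorem norm_ofReal_add_mul_le {a b : ℝ} (hb : 0 ≤ b) (hba : b ≤ a) (z : ℂ) :
    ‖(a : ℂ) + b * z‖ ≤ a - b + b * ‖1 + z‖ := by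
  have hsplit : (a : ℂ) + b * z = ((a - b : ℝ) : ℂ) + b * (1 + z) := by push_cast; ring
  calc ‖(a : ℂ) + b * z‖ ≤ ‖((a - b : ℝ) : ℂ)‖ + ‖(b : ℂ) * (1 + z)‖ :=
        hsplit ▸ norm_add_le _ _
    _ = a - b + b * ‖1 + z‖ := by
        rw [norm_mul, norm_real, norm_real, Real.norm_of_nonneg (sub_nonneg.mpr hba),
          Real.norm_of_nonneg hb]

/-- For a probability mass function `f` on `ℕ` with `f(0) ≥ f(1)`, the
characteristic function satisfies
`|∑ f(n) e^{irn}| ≤ f(1)·|1 + e^{ir}| + (1 − 2 f(1))` for every real `r`. -/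
theorem pmf_charFun_bound (f : ℕ → ℝ)
    (hf0 : ∀ n, 0 ≤ f n) (hf1 : (∑' n : ℕ, f n) = 1) (hmono : f 1 ≤ f 0) (r : ℝ) :
    ‖∑' n : ℕ, (f n : ℂ) * Complex.exp (Complex.I * r * n)‖ ≤
      f 1 * ‖1 + Complex.exp (Complex.I * r)‖ + (1 - 2 * f 1) := by
  have hf : Summable f := by
    by_contra h
    simp [tsum_eq_zero_of_not_summable h] at hf1
  have hnorm (n : ℕ) : ‖(f n : ℂ) * exp (I * r * n)‖ = f n := by
    rw [norm_ofReal_mul_exp_I_mul_nat, abs_of_nonneg (hf0 n)]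
  have hhead_tail := norm_tsum_le_norm_sum_range_add_tsum_norm
    (g := fun n : ℕ ↦ (f n : ℂ) * exp (I * r * n)) (by simpa only [hnorm] using hf) 2
  simp only [hnorm, Finset.sum_range_succ, Finset.sum_range_zero, zero_add, Nat.cast_zero,
    Nat.cast_one, mul_zero, mul_one, exp_zero] at hhead_tail
  have htail : ∑' n, f (n + 2) = 1 - f 0 - f 1 := by
    have := hf.sum_add_tsum_nat_add 2
    simp only [Finset.sum_range_succ, Finset.sum_range_zero, zero_add, hf1] at this
    linarith
  have hhead := norm_ofReal_add_mul_le (hf0 1) hmono (exp (I * r))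
  linarith
end

section
/- Fix ν ∈ [0,1), α > 0, ρ ∈ (0,1) and J ∈ ℤ_{>0}. Then there exist constants C < ∞ and ε₀ ∈ (0,1] such that for every ε ∈ (0,ε₀] and every j ∈ {0,1,…,J−1}, the tilted step distribution f with parameters (q, ᾱ, ν, ρ), where q = e^{−ε} and ᾱ = α e^{−εj}, satisfies: (a) f(0) ≥ 1 − Cε; (b) f(n) ≤ Cε·((ν+ᾱ)ρ/(1+ᾱ))^n for every n ≥ 1; and (c) f(0) ≥ f(1) ≥ ε/C. -/
set_option maxHeartbeats 1000000

private lemma tiltedStepDist_core (ν ρ q a aLo aHi E C ε : ℝ)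
    (hν0 : 0 ≤ ν) (hν1 : ν < 1) (hρ0 : 0 < ρ) (hρ1 : ρ < 1)
    (hε0 : 0 < ε)
    (hq0 : 0 < q) (hq1 : q < 1) (h1q : 1 - q ≤ ε) (hεq : ε * E ≤ 1 - q) (hE0 : 0 < E)
    (haLo : 0 < aLo) (ha1 : aLo ≤ a) (ha2 : a ≤ aHi)
    (hεa : aHi * ε ≤ 1 / 2)
    (hCa : aHi ≤ C)
    (hCb : (1 + aHi) * aHi * (1 + aHi) ≤ C * aLo)
    (hCc : 1 ≤ C * (ρ * aLo * E * (1 - ν) / (1 + aHi) ^ 2)) :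
    (1 - C * ε ≤ tiltedStepDist q a ν ρ 0) ∧
    (∀ n : ℕ, 1 ≤ n → tiltedStepDist q a ν ρ n ≤ C * ε * ((ν + a) * ρ / (1 + a)) ^ n) ∧
    (tiltedStepDist q a ν ρ 1 ≤ tiltedStepDist q a ν ρ 0) ∧
    (ε / C ≤ tiltedStepDist q a ν ρ 1) := by
  have ha0 : 0 < a := lt_of_lt_of_le haLo ha1
  have haHi0 : 0 < aHi := lt_of_lt_of_le haLo (ha1.trans ha2)
  have hC0 : 0 < C := lt_of_lt_of_le haHi0 hCa
  have hνρ : ν * ρ < 1 := by nlinarith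
  have hγden : 0 < 1 - ν * ρ := by linarith
  set γ : ℝ := (1 - ρ) / (1 - ν * ρ) with hγ
  have hγ0 : 0 < γ := div_pos (by linarith) hγden
  have hγ1 : γ ≤ 1 := by rw [hγ, div_le_one hγden]; nlinarith
  have haγ0 : 0 < a * γ := mul_pos ha0 hγ0
  have hden0 : 0 < 1 + q * a * γ := by nlinarith [mul_pos hq0 haγ0]
  set L : ℝ := (1 + a * γ) / (1 + q * a * γ) with hLdef
  have hL1 : 1 ≤ L := by
    rw [hLdef, le_div_iff₀ hden0]
    nlinarith [mul_nonneg (by linarith : (0:ℝ) ≤ 1 - q) haγ0.le]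
  have hL0 : 0 < L := lt_of_lt_of_le one_pos hL1
  have hLub : L ≤ 1 + aHi := by
    have h1 : L ≤ 1 + a * γ :=
      div_le_self (by nlinarith) (by nlinarith [mul_pos hq0 haγ0])
    nlinarith [mul_le_mul_of_nonneg_left hγ1 ha0.le]
  have ha1' : (1 : ℝ) ≤ 1 + a := by linarith
  have haq : a * (1 - q) ≤ aHi * ε :=
    mul_le_mul ha2 h1q (by linarith) haHi0.le
  have haq0 : 0 ≤ a * (1 - q) := by nlinarith
  have hf0 : tiltedStepDist q a ν ρ 0 = L * (1 - a * (1 - q) / (1 + a)) := by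
    simp [tiltedStepDist, stepDist, hLdef, hγ]
  have hf1 : tiltedStepDist q a ν ρ 1 =
      L * ρ * (a * (1 - q) * (1 - ν) / (1 + a) ^ 2) := by
    simp [tiltedStepDist, stepDist, hLdef, hγ]
  have hX : 1 - aHi * ε ≤ 1 - a * (1 - q) / (1 + a) := by
    have : a * (1 - q) / (1 + a) ≤ a * (1 - q) := div_le_self haq0 ha1'
    linarith
  have hX0 : (0 : ℝ) ≤ 1 - a * (1 - q) / (1 + a) := by linarith
  have hBnn : 0 ≤ a * (1 - q) * (1 - ν) / (1 + a) ^ 2 :=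
    div_nonneg (mul_nonneg haq0 (by linarith)) (by positivity)
  have hBle : a * (1 - q) * (1 - ν) / (1 + a) ^ 2 ≤ aHi * ε := by
    have h1 : a * (1 - q) * (1 - ν) / (1 + a) ^ 2 ≤ a * (1 - q) * (1 - ν) :=
      div_le_self (mul_nonneg haq0 (by linarith)) (by nlinarith)
    nlinarith [mul_le_mul_of_nonneg_left (show 1 - ν ≤ 1 by linarith) haq0]
  refine ⟨?_, ?_, ?_, ?_⟩
  · -- (a)
    rw [hf0]
    have hCε : aHi * ε ≤ C * ε := by nlinarith
    nlinarith [mul_le_mul_of_nonneg_right hL1 hX0]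
  · -- (b)
    rintro n hn
    obtain ⟨m, rfl⟩ : ∃ m, n = m + 1 := ⟨n - 1, (Nat.succ_pred_eq_of_pos hn).symm⟩
    have hfn : tiltedStepDist q a ν ρ (m + 1) =
        L * ρ ^ (m + 1) * ((a * (1 - q) * (1 - ν) / (1 + a) ^ 2) *
          ((ν + a) / (1 + a)) ^ m) := by
      simp [tiltedStepDist, stepDist, hLdef, hγ]
    rw [hfn]
    set r : ℝ := (ν + a) / (1 + a) with hrdef
    have hr0 : 0 < r := div_pos (by linarith) (by linarith)
    have hr_lb : aLo / (1 + aHi) ≤ r := by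
      rw [hrdef]
      apply div_le_div₀ (by linarith) (by linarith) (by positivity) (by linarith)
    have key : L * (a * (1 - q) * (1 - ν) / (1 + a) ^ 2) ≤ C * ε * r := by
      have h2 : L * (a * (1 - q) * (1 - ν) / (1 + a) ^ 2) ≤ (1 + aHi) * (aHi * ε) :=
        mul_le_mul hLub hBle hBnn (by linarith)
      have h3 : (1 + aHi) * (aHi * ε) ≤ C * ε * r := by
        have h5 : (1 + aHi) * aHi ≤ C * r := by
          have h6 : (1 + aHi) * aHi ≤ C * (aLo / (1 + aHi)) := by
            rw [show C * (aLo / (1 + aHi)) = C * aLo / (1 + aHi) from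
              (mul_div_assoc C aLo _).symm, le_div_iff₀ (by positivity)]
            exact hCb
          exact h6.trans (mul_le_mul_of_nonneg_left hr_lb hC0.le)
        calc (1 + aHi) * (aHi * ε) = (1 + aHi) * aHi * ε := by ring
          _ ≤ C * r * ε := mul_le_mul_of_nonneg_right h5 hε0.le
          _ = C * ε * r := by ring
      linarith
    have hrn : (0 : ℝ) ≤ ρ ^ (m + 1) * r ^ m :=
      mul_nonneg (by positivity) (pow_nonneg hr0.le m)
    calc L * ρ ^ (m + 1) * ((a * (1 - q) * (1 - ν) / (1 + a) ^ 2) * r ^ m)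
        = (L * (a * (1 - q) * (1 - ν) / (1 + a) ^ 2)) * (ρ ^ (m + 1) * r ^ m) := by
          ring
      _ ≤ (C * ε * r) * (ρ ^ (m + 1) * r ^ m) := mul_le_mul_of_nonneg_right key hrn
      _ = C * ε * ((ν + a) * ρ / (1 + a)) ^ (m + 1) := by
          rw [show (ν + a) * ρ / (1 + a) = r * ρ by rw [hrdef]; ring,
            mul_pow, pow_succ r m]
          ring
  · -- f 1 ≤ f 0
    rw [hf0, hf1]
    have hlhs : ρ * (a * (1 - q) * (1 - ν) / (1 + a) ^ 2) ≤ 1 / 2 := by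
      have h1 : ρ * (a * (1 - q) * (1 - ν) / (1 + a) ^ 2) ≤ 1 * (aHi * ε) :=
        mul_le_mul hρ1.le hBle hBnn zero_le_one
      linarith
    have hrhs : (1 : ℝ) / 2 ≤ 1 - a * (1 - q) / (1 + a) := by linarith
    nlinarith [mul_le_mul_of_nonneg_left (hlhs.trans hrhs) hL0.le]
  · -- ε / C ≤ f 1
    rw [hf1]
    have h1 : aLo * (ε * E) * (1 - ν) / (1 + aHi) ^ 2
        ≤ a * (1 - q) * (1 - ν) / (1 + a) ^ 2 := by
      apply div_le_div₀ (by nlinarith)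
        (by nlinarith [mul_le_mul ha1 hεq (by positivity) ha0.le]) (by positivity)
        (by nlinarith)
    have h2 : ε * (ρ * aLo * E * (1 - ν) / (1 + aHi) ^ 2)
        ≤ L * ρ * (a * (1 - q) * (1 - ν) / (1 + a) ^ 2) := by
      have hEK : ε * (ρ * aLo * E * (1 - ν) / (1 + aHi) ^ 2)
          = ρ * (aLo * (ε * E) * (1 - ν) / (1 + aHi) ^ 2) := by ring
      rw [hEK]
      calc ρ * (aLo * (ε * E) * (1 - ν) / (1 + aHi) ^ 2)
          ≤ ρ * (a * (1 - q) * (1 - ν) / (1 + a) ^ 2) :=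
            mul_le_mul_of_nonneg_left h1 hρ0.le
        _ = 1 * (ρ * (a * (1 - q) * (1 - ν) / (1 + a) ^ 2)) := by ring
        _ ≤ L * (ρ * (a * (1 - q) * (1 - ν) / (1 + a) ^ 2)) :=
            mul_le_mul_of_nonneg_right hL1 (mul_nonneg hρ0.le hBnn)
        _ = L * ρ * (a * (1 - q) * (1 - ν) / (1 + a) ^ 2) := by ring
    have h3 : ε / C ≤ ε * (ρ * aLo * E * (1 - ν) / (1 + aHi) ^ 2) := by
      rw [div_le_iff₀ hC0]
      calc ε = ε * 1 := (mul_one ε).symm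
        _ ≤ ε * (C * (ρ * aLo * E * (1 - ν) / (1 + aHi) ^ 2)) :=
            mul_le_mul_of_nonneg_left hCc hε0.le
        _ = ε * (ρ * aLo * E * (1 - ν) / (1 + aHi) ^ 2) * C := by ring
    linarith

/-- For fixed `ν ∈ [0,1)`, `α > 0`, `ρ ∈ (0,1)`, `J ∈ ℤ_{>0}`, there are
`C < ∞` and `ε₀ ∈ (0,1]` such that for all `ε ∈ (0,ε₀]` and `j ∈ {0,…,J−1}`, the tilted
step distribution `f` with `q = e^{−ε}`, `ᾱ = α e^{−εj}` satisfies
(a) `f(0) ≥ 1 − Cε`; (b) `f(n) ≤ Cε·((ν+ᾱ)ρ/(1+ᾱ))^n` for `n ≥ 1`;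
(c) `f(0) ≥ f(1) ≥ ε/C`. -/
theorem tiltedStepDist_small_eps_bounds (ν α ρ : ℝ) (J : ℕ)
    (hν0 : 0 ≤ ν) (hν1 : ν < 1) (hα : 0 < α) (hρ0 : 0 < ρ) (hρ1 : ρ < 1) (hJ : 0 < J) :
    ∃ C : ℝ, 0 < C ∧ ∃ ε₀ : ℝ, ε₀ ∈ Set.Ioc (0 : ℝ) 1 ∧
      ∀ ε ∈ Set.Ioc (0 : ℝ) ε₀, ∀ j < J,
        (1 - C * ε ≤ tiltedStepDist (Real.exp (-ε)) (α * Real.exp (-ε * j)) ν ρ 0) ∧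
        (∀ n : ℕ, 1 ≤ n →
          tiltedStepDist (Real.exp (-ε)) (α * Real.exp (-ε * j)) ν ρ n ≤
            C * ε * ((ν + α * Real.exp (-ε * j)) * ρ / (1 + α * Real.exp (-ε * j))) ^ n) ∧
        (tiltedStepDist (Real.exp (-ε)) (α * Real.exp (-ε * j)) ν ρ 1 ≤
          tiltedStepDist (Real.exp (-ε)) (α * Real.exp (-ε * j)) ν ρ 0) ∧
        (ε / C ≤ tiltedStepDist (Real.exp (-ε)) (α * Real.exp (-ε * j)) ν ρ 1) := by
  have hK0 : 0 < ρ * (α * Real.exp (-(J : ℝ))) * Real.exp (-1 : ℝ) * (1 - ν) / (1 + α) ^ 2 := by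
    apply div_pos _ (by positivity)
    apply mul_pos _ (by linarith)
    positivity
  set K : ℝ := ρ * (α * Real.exp (-(J : ℝ))) * Real.exp (-1 : ℝ) * (1 - ν) / (1 + α) ^ 2
    with hKdef
  set C : ℝ := α + (1 + α) ^ 2 * Real.exp J + K⁻¹ with hCdef
  have hKinv : 0 < K⁻¹ := inv_pos.mpr hK0
  have hE0 : 0 < (1 + α) ^ 2 * Real.exp J := by positivity
  have hCa : α ≤ C := by rw [hCdef]; linarith
  have hCb : (1 + α) ^ 2 * Real.exp J ≤ C := by rw [hCdef]; linarith
  have hCc : K⁻¹ ≤ C := by rw [hCdef]; linarith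
  have hC0 : 0 < C := lt_of_lt_of_le hα hCa
  refine ⟨C, hC0, min 1 (1 / (2 * (α + 1))),
    ⟨lt_min one_pos (by positivity), min_le_left _ _⟩, ?_⟩
  rintro ε ⟨hε0, hεm⟩ j hj
  have hε1 : ε ≤ 1 := hεm.trans (min_le_left _ _)
  have hεα : ε ≤ 1 / (2 * (α + 1)) := hεm.trans (min_le_right _ _)
  have hαε : α * ε ≤ 1 / 2 := by
    rw [le_div_iff₀ (by positivity)] at hεα
    nlinarith
  have hq0 : 0 < Real.exp (-ε) := Real.exp_pos _
  have hq1 : Real.exp (-ε) < 1 := Real.exp_lt_one_iff.mpr (by linarith)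
  have h1q : 1 - Real.exp (-ε) ≤ ε := by
    have := Real.add_one_le_exp (-ε)
    linarith
  have hqe : Real.exp (-1 : ℝ) ≤ Real.exp (-ε) := Real.exp_le_exp.mpr (by linarith)
  have hεq : ε * Real.exp (-1 : ℝ) ≤ 1 - Real.exp (-ε) := by
    have h1 : Real.exp ε * Real.exp (-ε) = 1 := by
      rw [← Real.exp_add]; simp
    have h2 := Real.add_one_le_exp ε
    nlinarith [mul_le_mul_of_nonneg_left h2 hq0.le,
      mul_le_mul_of_nonneg_left hqe hε0.le]
  have hj' : (j : ℝ) ≤ (J : ℝ) := by exact_mod_cast hj.le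
  have hj0 : (0 : ℝ) ≤ (j : ℝ) := Nat.cast_nonneg _
  have ha_ub : α * Real.exp (-ε * j) ≤ α := by
    nlinarith [Real.exp_le_one_iff.mpr (show -ε * j ≤ 0 by nlinarith),
      Real.exp_pos (-ε * j)]
  have ha_lb : α * Real.exp (-(J : ℝ)) ≤ α * Real.exp (-ε * j) := by
    have : Real.exp (-(J : ℝ)) ≤ Real.exp (-ε * j) :=
      Real.exp_le_exp.mpr (by nlinarith)
    nlinarith
  exact tiltedStepDist_core ν ρ (Real.exp (-ε)) (α * Real.exp (-ε * j))
    (α * Real.exp (-(J : ℝ))) α (Real.exp (-1 : ℝ)) C ε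
    hν0 hν1 hρ0 hρ1 hε0 hq0 hq1 h1q hεq (Real.exp_pos _)
    (by positivity) ha_lb ha_ub hαε hCa
    (by
      have h4 : (1 + α) ^ 2 * Real.exp J * (α * Real.exp (-(J : ℝ)))
          = (1 + α) * α * (1 + α) := by
        rw [mul_comm α (Real.exp (-(J:ℝ))), ← mul_assoc, mul_assoc _ (Real.exp (J:ℝ)),
          ← Real.exp_add]
        simp; ring
      nlinarith [mul_le_mul_of_nonneg_right hCb
        (by positivity : (0:ℝ) ≤ α * Real.exp (-(J : ℝ)))])
    (by
      have hKC : K * K⁻¹ = 1 := mul_inv_cancel₀ hK0.ne'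
      have := mul_le_mul_of_nonneg_left hCc hK0.le
      rw [hKdef] at *
      nlinarith)
end
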